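/- arXiv:2209.02598 — 9 statements merged into one kernel-verified Lean document; each statement's English description precedes it below -/
import Mathlib

section
/- For any measure space (Ω,𝓕,μ), p ∈ [1,∞), and k ≥ 1, the set 𝒢_{p,k} of functions in L^p that are simple functions taking at most k distinct values (with respect to a measurable partition of Ω into at most k sets) is closed in L^p. -/
open MeasureTheory ENNReal Filter Topology

variable {Ω : Type*} [MeasurableSpace Ω]

/-- A measurable function taking at most `k` distinct values. -/
def IsSimpleLE (k : ℕ) (g : Ω → ℝ) : Prop :=
  Measurable g ∧ ∃ s : Finset ℝ, s.card ≤ k ∧ ∀ x, g x ∈ s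

/-- The set `𝒢_{p,k}` of elements of `L^p` that agree a.e. with a measurable
function taking at most `k` distinct values. -/
def Gpk (p : ℝ≥0∞) (μ : MeasureTheory.Measure Ω) (k : ℕ) : Set (Lp ℝ p μ) :=
  {f | ∃ g : Ω → ℝ, IsSimpleLE k g ∧ (f : Ω → ℝ) =ᵐ[μ] g}

/-- Key combinatorial lemma: a pointwise limit (on a set `A`) of functions each taking
at most `k` values takes at most `k` values on `A`: every finite set of such values has
cardinality at most `k`. -/
lemma card_le_of_limit {k : ℕ} (hk : 1 ≤ k) (g : ℕ → Ω → ℝ) (s : ℕ → Finset ℝ)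
    (hs : ∀ i, (s i).card ≤ k) (hgs : ∀ i x, g i x ∈ s i) (f : Ω → ℝ) (A : Set Ω)
    (hconv : ∀ x ∈ A, Tendsto (fun i => g i x) atTop (𝓝 (f x)))
    (t : Finset ℝ) (ht : ↑t ⊆ f '' A) : t.card ≤ k := by
  by_contra hlt
  push_neg at hlt
  -- choose preimages
  have h2 : 1 < t.card := lt_of_le_of_lt hk hlt
  obtain ⟨a, ha, b, hb, hab⟩ := Finset.one_lt_card.mp h2
  have hΩ : Nonempty Ω := ⟨(ht ha).choose⟩
  have hx : ∀ v ∈ t, ∃ x, x ∈ A ∧ f x = v := by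
    intro v hv
    obtain ⟨x, hxA, hxv⟩ := ht hv
    exact ⟨x, hxA, hxv⟩
  choose! x hxA hxv using hx
  set P := (t ×ˢ t).filter (fun p => p.1 ≠ p.2) with hP
  have hPne : P.Nonempty :=
    ⟨(a, b), Finset.mem_filter.mpr ⟨Finset.mem_product.mpr ⟨ha, hb⟩, hab⟩⟩
  set δ := P.inf' hPne (fun p : ℝ × ℝ => |p.1 - p.2|) with hδ
  have hδpos : 0 < δ := by
    rw [hδ, Finset.lt_inf'_iff]
    rintro ⟨v, w⟩ hvw
    simp only [hP, Finset.mem_filter] at hvw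
    exact abs_pos.mpr (sub_ne_zero.mpr hvw.2)
  have hδle : ∀ v ∈ t, ∀ w ∈ t, v ≠ w → δ ≤ |v - w| := by
    intro v hv w hw hvw
    have hmem : (v, w) ∈ P := by
      simp only [hP, Finset.mem_filter, Finset.mem_product]
      exact ⟨⟨hv, hw⟩, hvw⟩
    exact Finset.inf'_le (fun p : ℝ × ℝ => |p.1 - p.2|) hmem
  -- find a common index where all g i (x v) are δ/2-close to v
  have hev : ∀ᶠ i in atTop, ∀ v ∈ t, |g i (x v) - v| < δ / 2 := by
    rw [Filter.eventually_all_finset]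
    intro v hv
    have h1 := hconv (x v) (hxA v hv)
    rw [hxv v hv] at h1
    obtain ⟨N, hN⟩ := Metric.tendsto_atTop.mp h1 (δ / 2) (by positivity)
    filter_upwards [Filter.eventually_ge_atTop N] with i hi
    simpa [Real.dist_eq] using hN i hi
  obtain ⟨i, hi⟩ := hev.exists
  -- the map v ↦ g i (x v) is injective on t with values in s i
  have hinj : Set.InjOn (fun v => g i (x v)) ↑t := by
    intro v hv w hw heq
    simp only [Finset.mem_coe] at hv hw
    simp only at heq
    by_contra hvw
    have h1 := hi v hv
    have h2 := hi w hw
    have hlt' : |v - w| < δ := by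
      calc |v - w| = |(g i (x w) - w) - (g i (x w) - v)| := by congr 1; ring
        _ ≤ |g i (x w) - w| + |g i (x w) - v| := abs_sub _ _
        _ = |g i (x w) - w| + |g i (x v) - v| := by rw [heq]
        _ < δ / 2 + δ / 2 := add_lt_add h2 h1
        _ = δ := by ring
    exact absurd (hδle v hv w hw hvw) (not_le.mpr hlt')
  have himg : t.image (fun v => g i (x v)) ⊆ s i := by
    intro y hy
    obtain ⟨v, hv, hvy⟩ := Finset.mem_image.mp hy
    exact hvy ▸ hgs i (x v)
  have hcard := Finset.card_image_of_injOn hinj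
  have hle : t.card ≤ (s i).card := hcard ▸ Finset.card_le_card himg
  have := hs i
  omega

set_option synthInstance.maxHeartbeats 1000000 in
theorem Gpk_isClosed (μ : MeasureTheory.Measure Ω) (p : ℝ≥0∞) [Fact (1 ≤ p)]
    (hp : p ≠ ∞) (k : ℕ) (hk : 1 ≤ k) :
    IsClosed (Gpk p μ k) := by
  have hp0 : p ≠ 0 := (lt_of_lt_of_le zero_lt_one Fact.out).ne'
  refine IsSeqClosed.isClosed ?_
  intro F f hF hFf
  choose g hg hFg using hF
  have hgmeas : ∀ n, Measurable (g n) := fun n => (hg n).1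
  choose s hscard hgs using fun n => (hg n).2
  -- convergence in measure, hence a.e. along a subsequence
  have htm : TendstoInMeasure μ (fun n => ⇑(F n)) atTop ⇑f :=
    tendstoInMeasure_of_tendsto_eLpNorm hp0 (fun n => Lp.aestronglyMeasurable _)
      (Lp.aestronglyMeasurable f) ((Lp.tendsto_Lp_iff_tendsto_eLpNorm' F f).mp hFf)
  obtain ⟨ns, _, hae⟩ := htm.exists_seq_tendsto_ae
  have hae' : ∀ᵐ x ∂μ, Tendsto (fun i => g (ns i) x) atTop (𝓝 (f x)) := by
    filter_upwards [hae, ae_all_iff.2 fun i => hFg (ns i)] with x hx h2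
    exact hx.congr fun i => h2 i
  -- a measurable conull set where convergence holds
  set T := {x | Tendsto (fun i => g (ns i) x) atTop (𝓝 (f x))} with hT
  have hTc : μ Tᶜ = 0 := hae'
  set N := toMeasurable μ Tᶜ with hNdef
  have hN : μ N = 0 := by rw [hNdef, measure_toMeasurable]; exact hTc
  set A := Nᶜ with hAdef
  have hAmeas : MeasurableSet A := (measurableSet_toMeasurable μ Tᶜ).compl
  have hAT : A ⊆ T := fun x hx => by
    by_contra h
    exact hx (subset_toMeasurable μ Tᶜ h)
  have hconv : ∀ x ∈ A, Tendsto (fun i => g (ns i) x) atTop (𝓝 (f x)) := fun x hx => hAT hx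
  -- the limit takes at most k values on A
  have key : ∀ t : Finset ℝ, ↑t ⊆ (⇑f) '' A → t.card ≤ k :=
    card_le_of_limit hk (fun i => g (ns i)) (fun i => s (ns i)) (fun i => hscard (ns i))
      (fun i x => hgs (ns i) x) (⇑f) A hconv
  have hfin : ((⇑f) '' A).Finite := by
    by_contra hinf
    have hinf' : ((⇑f) '' A).Infinite := hinf
    obtain ⟨t, hts, htc⟩ := hinf'.exists_subset_card_eq (k + 1)
    have := key t hts
    omega
  have hcard : hfin.toFinset.card ≤ k := by
    refine key hfin.toFinset ?_
    simp
  -- choose the value outside A and the finset of values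
  classical
  obtain ⟨c, sfin, hcmem, hsfincard, hsub⟩ :
      ∃ (c : ℝ) (sfin : Finset ℝ), c ∈ sfin ∧ sfin.card ≤ k ∧ ∀ x ∈ A, f x ∈ sfin := by
    rcases Set.eq_empty_or_nonempty A with hAe | ⟨x0, hx0⟩
    · exact ⟨0, {0}, by simp, by simpa using hk, fun x hx => by rw [hAe] at hx; exact hx.elim⟩
    · refine ⟨f x0, hfin.toFinset, ?_, hcard, fun x hx => ?_⟩
      · simp only [Set.Finite.mem_toFinset]
        exact ⟨x0, hx0, rfl⟩
      · simp only [Set.Finite.mem_toFinset]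
        exact ⟨x, hx, rfl⟩
  refine ⟨fun x => if x ∈ A then f x else c, ⟨?_, sfin, hsfincard, ?_⟩, ?_⟩
  · exact Measurable.ite hAmeas (Lp.stronglyMeasurable f).measurable measurable_const
  · intro x
    by_cases hx : x ∈ A <;> simp [hx, hsub x, hcmem]
  · have hAae : A ∈ ae μ := by
      rw [mem_ae_iff, hAdef, compl_compl]
      exact hN
    filter_upwards [hAae] with x hx
    simp [hx]
end

section
/- For any finite measure space (Ω,𝓕,μ), p ∈ [1,∞), and k ≥ 1, the set 𝒢_{p,k} is proximinal in L^p: for every f ∈ L^p there exists g ∈ 𝒢_{p,k} with ‖f−g‖_p equal to the distance from f to 𝒢_{p,k}. -/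
open MeasureTheory ENNReal Filter Topology

variable {Ω : Type*} [MeasurableSpace Ω]

namespace GpkAux

variable {k : ℕ}

/-- distance from `t` to the nearest of the values `c i`. -/
noncomputable def minv (hk : 1 ≤ k) (c : Fin k → ℝ) (t : ℝ) : ℝ :=
  Finset.univ.inf' ⟨⟨0, hk⟩, Finset.mem_univ _⟩ fun i => |t - c i|

lemma minv_le (hk : 1 ≤ k) (c : Fin k → ℝ) (t : ℝ) (i : Fin k) :
    minv hk c t ≤ |t - c i| := Finset.inf'_le _ (Finset.mem_univ i)

lemma le_minv {hk : 1 ≤ k} {c : Fin k → ℝ} {t r : ℝ} (h : ∀ i, r ≤ |t - c i|) :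
    r ≤ minv hk c t := Finset.le_inf' _ _ fun i _ => h i

lemma continuous_minv (hk : 1 ≤ k) (c : Fin k → ℝ) : Continuous (minv hk c) :=
  Continuous.finset_inf'_apply _ fun _ _ => (continuous_id.sub continuous_const).abs

/-- index of (the least) nearest value. -/
noncomputable def nIdx (hk : 1 ≤ k) (c : Fin k → ℝ) (t : ℝ) : Fin k :=
  (Finset.univ.filter fun i => |t - c i| = minv hk c t).min' (by
    obtain ⟨i, -, hi⟩ := Finset.exists_mem_eq_inf'
      (⟨⟨0, hk⟩, Finset.mem_univ _⟩ : (Finset.univ : Finset (Fin k)).Nonempty)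
      (fun i => |t - c i|)
    exact ⟨i, Finset.mem_filter.2 ⟨Finset.mem_univ _, hi.symm⟩⟩)

lemma abs_nIdx (hk : 1 ≤ k) (c : Fin k → ℝ) (t : ℝ) :
    |t - c (nIdx hk c t)| = minv hk c t := by
  have := Finset.min'_mem (Finset.univ.filter fun i => |t - c i| = minv hk c t)
    (by
      obtain ⟨i, -, hi⟩ := Finset.exists_mem_eq_inf'
        (⟨⟨0, hk⟩, Finset.mem_univ _⟩ : (Finset.univ : Finset (Fin k)).Nonempty)
        (fun i => |t - c i|)
      exact ⟨i, Finset.mem_filter.2 ⟨Finset.mem_univ _, hi.symm⟩⟩)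
  exact (Finset.mem_filter.1 this).2

lemma nIdx_eq_iff (hk : 1 ≤ k) (c : Fin k → ℝ) (t : ℝ) (i : Fin k) :
    nIdx hk c t = i ↔ (|t - c i| = minv hk c t ∧ ∀ j, j < i → |t - c j| ≠ minv hk c t) := by
  constructor
  · rintro rfl
    refine ⟨abs_nIdx hk c t, fun j hj hj' => ?_⟩
    exact absurd (Finset.min'_le _ j (Finset.mem_filter.2 ⟨Finset.mem_univ _, hj'⟩))
      (not_le.2 hj)
  · rintro ⟨h1, h2⟩
    refine le_antisymm (Finset.min'_le _ i (Finset.mem_filter.2 ⟨Finset.mem_univ _, h1⟩))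
      (Finset.le_min' _ _ _ fun j hj => ?_)
    by_contra hlt
    push_neg at hlt
    exact h2 j hlt (Finset.mem_filter.1 hj).2

lemma measurable_nIdx (hk : 1 ≤ k) (c : Fin k → ℝ) : Measurable (nIdx hk c) := by
  apply measurable_to_countable'
  intro i
  have hset : nIdx hk c ⁻¹' {i} =
      {t | |t - c i| = minv hk c t} ∩
        ⋂ (j : Fin k) (_ : j < i), {t | |t - c j| = minv hk c t}ᶜ := by
    ext t
    simp only [Set.mem_preimage, Set.mem_singleton_iff, Set.mem_inter_iff, Set.mem_iInter,
      Set.mem_compl_iff, Set.mem_setOf_eq, nIdx_eq_iff hk c t i]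
  rw [hset]
  have habs : ∀ j : Fin k, Measurable fun t => |t - c j| :=
    fun j => ((continuous_id.sub continuous_const).abs).measurable
  exact ((measurableSet_eq_fun (habs i) (continuous_minv hk c).measurable).inter
    (MeasurableSet.iInter fun j => MeasurableSet.iInter fun _ =>
      (measurableSet_eq_fun (habs j) (continuous_minv hk c).measurable).compl))

/-- the nearest-value projection. -/
noncomputable def proj (hk : 1 ≤ k) (c : Fin k → ℝ) (t : ℝ) : ℝ := c (nIdx hk c t)

lemma abs_sub_proj (hk : 1 ≤ k) (c : Fin k → ℝ) (t : ℝ) :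
    |t - proj hk c t| = minv hk c t := abs_nIdx hk c t

lemma measurable_proj (hk : 1 ≤ k) (c : Fin k → ℝ) : Measurable (proj hk c) :=
  (measurable_of_countable c).comp (measurable_nIdx hk c)

lemma exists_enum (hk : 1 ≤ k) {s : Finset ℝ} (hcard : s.card ≤ k) :
    ∃ c : Fin k → ℝ, ∀ a ∈ s, ∃ i, c i = a := by
  refine ⟨fun i => s.toList.getD i 0, fun a ha => ?_⟩
  have ha' : a ∈ s.toList := Finset.mem_toList.2 ha
  obtain ⟨n, hn, hget⟩ := List.mem_iff_getElem.1 ha'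
  have hnk : n < k := lt_of_lt_of_le (by rwa [Finset.length_toList] at hn) hcard
  exact ⟨⟨n, hnk⟩, by simp only [List.getD_eq_getElem _ _ hn]; exact hget⟩

end GpkAux


theorem Gpk_proximinal_finiteMeasure (μ : MeasureTheory.Measure Ω) [IsFiniteMeasure μ]
    (p : ℝ≥0∞) [Fact (1 ≤ p)] (hp : p ≠ ∞) (k : ℕ) (hk : 1 ≤ k) (f : Lp ℝ p μ) :
    ∃ g ∈ Gpk p μ k, ‖f - g‖ = Metric.infDist f (Gpk p μ k) := by
  classical
  have hp1 : (1 : ℝ≥0∞) ≤ p := Fact.out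
  have hpne0 : p ≠ 0 := (lt_of_lt_of_le zero_lt_one hp1).ne'
  set f₀ : Ω → ℝ := (f : Ω → ℝ) with hf₀def
  have hf₀m : Measurable f₀ := (Lp.stronglyMeasurable f).measurable
  -- the zero function is in Gpk
  have hzero : (0 : Lp ℝ p μ) ∈ Gpk p μ k := by
    refine ⟨fun _ => 0, ⟨measurable_const, {0}, by simpa using hk, fun x => by simp⟩, ?_⟩
    filter_upwards [Lp.coeFn_zero ℝ p μ] with x hx
    simpa using hx
  -- membership of projections
  have memG : ∀ c : Fin k → ℝ, MemLp (fun x => GpkAux.proj hk c (f₀ x)) p μ := by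
    intro c
    have hne : (Finset.univ : Finset (Fin k)).Nonempty := ⟨⟨0, hk⟩, Finset.mem_univ _⟩
    refine MemLp.of_bound
      (((GpkAux.measurable_proj hk c).comp hf₀m).aestronglyMeasurable)
      (Finset.univ.sup' hne fun i => |c i|) (Eventually.of_forall fun x => ?_)
    rw [Real.norm_eq_abs]
    exact Finset.le_sup' (fun i => |c i|) (Finset.mem_univ _)
  set Gc : (Fin k → ℝ) → Lp ℝ p μ := fun c => (memG c).toLp _ with hGc
  have hGae : ∀ c : Fin k → ℝ,
      (⇑(f - Gc c) : Ω → ℝ) =ᵐ[μ] fun x => f₀ x - GpkAux.proj hk c (f₀ x) := by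
    intro c
    filter_upwards [Lp.coeFn_sub f (Gc c), (memG c).coeFn_toLp] with x h1 h2
    rw [h1, Pi.sub_apply, h2]
  have hGmem : ∀ c : Fin k → ℝ, Gc c ∈ Gpk p μ k := by
    intro c
    refine ⟨fun x => GpkAux.proj hk c (f₀ x),
      ⟨(GpkAux.measurable_proj hk c).comp hf₀m, Finset.univ.image c, ?_, fun x => ?_⟩,
      (memG c).coeFn_toLp⟩
    · exact le_trans (Finset.card_image_le) (by simp)
    · exact Finset.mem_image.2 ⟨_, Finset.mem_univ _, rfl⟩
  have normG : ∀ c : Fin k → ℝ,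
      ‖f - Gc c‖ = (eLpNorm (fun x => f₀ x - GpkAux.proj hk c (f₀ x)) p μ).toReal := by
    intro c
    rw [Lp.norm_def, eLpNorm_congr_ae (hGae c)]
  have hGfin : ∀ c : Fin k → ℝ,
      eLpNorm (fun x => f₀ x - GpkAux.proj hk c (f₀ x)) p μ ≠ ⊤ := by
    intro c
    rw [← eLpNorm_congr_ae (hGae c)]
    exact (Lp.eLpNorm_lt_top _).ne
  -- step: domination by any member of Gpk
  have hle : ∀ h ∈ Gpk p μ k, ∃ c : Fin k → ℝ, ‖f - Gc c‖ ≤ ‖f - h‖ := by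
    rintro h ⟨g, ⟨hgm, s, hcard, hsmem⟩, hae⟩
    obtain ⟨c, hc⟩ := GpkAux.exists_enum hk hcard
    refine ⟨c, ?_⟩
    rw [normG, Lp.norm_def]
    refine ENNReal.toReal_mono (Lp.eLpNorm_lt_top _).ne ?_
    have haemono : ∀ᵐ x ∂μ, ‖f₀ x - GpkAux.proj hk c (f₀ x)‖ ≤ ‖(⇑(f - h) : Ω → ℝ) x‖ := by
      filter_upwards [hae, Lp.coeFn_sub f h] with x hx h2x
      rw [h2x, Pi.sub_apply, Real.norm_eq_abs, Real.norm_eq_abs,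
        GpkAux.abs_sub_proj hk c (f₀ x), hx]
      obtain ⟨i, hi⟩ := hc (g x) (hsmem x)
      calc GpkAux.minv hk c (f₀ x) ≤ |f₀ x - c i| := GpkAux.minv_le hk c (f₀ x) i
        _ = |f₀ x - g x| := by rw [hi]
    exact eLpNorm_mono_ae haemono
  -- trivial case μ = 0
  rcases eq_or_ne (μ Set.univ) 0 with hμ0 | hμ0
  · refine ⟨0, hzero, le_antisymm ?_ ?_⟩
    · have hae0 : (⇑(f - 0) : Ω → ℝ) =ᵐ[μ] 0 :=
        (ae_iff.2 (measure_mono_null (Set.subset_univ _) hμ0))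
      rw [Lp.norm_def, eLpNorm_congr_ae hae0, eLpNorm_zero]
      simpa using Metric.infDist_nonneg
    · rw [← dist_eq_norm]
      exact Metric.infDist_le_dist_of_mem hzero
  -- main case
  set m := Metric.infDist f (Gpk p μ k) with hm
  have hm0 : 0 ≤ m := Metric.infDist_nonneg
  have hmlb : ∀ c : Fin k → ℝ, m ≤ ‖f - Gc c‖ := by
    intro c
    rw [← dist_eq_norm]
    exact Metric.infDist_le_dist_of_mem (hGmem c)
  -- minimizing sequence
  have hseq : ∀ n : ℕ, ∃ c : Fin k → ℝ, ‖f - Gc c‖ < m + 1 / ((n : ℝ) + 1) := by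
    intro n
    have hpos : 0 < 1 / ((n : ℝ) + 1) := by positivity
    obtain ⟨h, hh, hdist⟩ := (Metric.infDist_lt_iff ⟨0, hzero⟩).1
      (lt_add_of_pos_right m hpos)
    obtain ⟨c, hc⟩ := hle h hh
    exact ⟨c, lt_of_le_of_lt hc (by rwa [← dist_eq_norm])⟩
  choose c hc using hseq
  have hten : Tendsto (fun n => ‖f - Gc (c n)‖) atTop (𝓝 m) := by
    have hub : Tendsto (fun n : ℕ => m + 1 / ((n : ℝ) + 1)) atTop (𝓝 (m + 0)) :=
      tendsto_const_nhds.add tendsto_one_div_add_atTop_nhds_zero_nat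
    rw [add_zero] at hub
    exact tendsto_of_tendsto_of_tendsto_of_le_of_le tendsto_const_nhds hub
      (fun n => hmlb (c n)) (fun n => (hc n).le)
  -- a set of positive measure where f₀ is bounded
  have hT : ∃ T : ℕ, μ {x | |f₀ x| ≤ (T : ℝ)} ≠ 0 := by
    by_contra hcon
    push_neg at hcon
    apply hμ0
    have huniv : (Set.univ : Set Ω) = ⋃ T : ℕ, {x | |f₀ x| ≤ (T : ℝ)} := by
      ext x
      simp only [Set.mem_univ, Set.mem_iUnion, Set.mem_setOf_eq, true_iff]
      exact ⟨⌈|f₀ x|⌉₊, Nat.le_ceil _⟩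
    rw [huniv]
    exact measure_iUnion_null hcon
  obtain ⟨T, hTne⟩ := hT
  set A : Set Ω := {x | |f₀ x| ≤ (T : ℝ)} with hA
  have hAmeas : MeasurableSet A := measurableSet_le hf₀m.abs measurable_const
  have hpt : 0 < p.toReal := ENNReal.toReal_pos hpne0 hp
  set α' : ℝ := (μ A ^ (1 / p.toReal)).toReal with hα'
  have hαne_top : μ A ^ (1 / p.toReal) ≠ ⊤ :=
    ENNReal.rpow_ne_top_of_nonneg (by positivity) (measure_lt_top μ A).ne
  have hα'pos : 0 < α' := by
    apply ENNReal.toReal_pos _ hαne_top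
    exact (ENNReal.rpow_pos (pos_iff_ne_zero.2 hTne) (measure_lt_top μ A).ne).ne'
  set r : ℝ := (m + 1) / α' with hr
  have hr0 : 0 ≤ r := by positivity
  set B : ℝ := (T : ℝ) + r with hB
  -- boundedness of one coordinate of the minimizing sequence
  have hbd : ∀ n, ∃ i, |c n i| ≤ B := by
    intro n
    by_contra hcon
    push_neg at hcon
    have hptw : ∀ x, ‖A.indicator (fun _ => r) x‖ ≤ ‖f₀ x - GpkAux.proj hk (c n) (f₀ x)‖ := by
      intro x
      by_cases hx : x ∈ A
      · rw [Set.indicator_of_mem hx, Real.norm_eq_abs, Real.norm_eq_abs,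
          abs_of_nonneg hr0, GpkAux.abs_sub_proj]
        refine GpkAux.le_minv fun i => ?_
        have h1 : |c n i| - |f₀ x| ≤ |c n i - f₀ x| := abs_sub_abs_le_abs_sub _ _
        have h2 : |f₀ x| ≤ (T : ℝ) := hx
        have h3 := hcon i
        rw [abs_sub_comm]
        simp only [hB] at h3
        linarith
      · rw [Set.indicator_of_notMem hx]
        simp [norm_nonneg]
    have hlow := eLpNorm_mono_ae (μ := μ) (p := p) (Eventually.of_forall hptw)
    rw [eLpNorm_indicator_const hAmeas hpne0 hp] at hlow
    have h2 : r * α' ≤ ‖f - Gc (c n)‖ := by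
      rw [normG]
      have h3 := ENNReal.toReal_mono (hGfin (c n)) hlow
      rwa [ENNReal.toReal_mul, toReal_enorm, Real.norm_eq_abs,
        abs_of_nonneg hr0] at h3
    have h4 : r * α' = m + 1 := div_mul_cancel₀ _ (ne_of_gt hα'pos)
    have h5 := hc n
    have h6 : 1 / ((n : ℝ) + 1) ≤ 1 := by
      rw [div_le_one (by positivity)]
      linarith [Nat.cast_nonneg (α := ℝ) n]
    linarith
  -- pigeonhole: a fixed coordinate bounded along a subsequence
  have hfreq : ∃ i0 : Fin k, ∃ᶠ n in atTop, |c n i0| ≤ B := by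
    by_contra hcon
    push_neg at hcon
    have hev : ∀ i : Fin k, ∀ᶠ n in atTop, ¬(|c n i| ≤ B) :=
      fun i => (hcon i).mono fun n h => not_le.2 h
    obtain ⟨n, hn⟩ := (eventually_all.2 hev).exists
    obtain ⟨i, hi⟩ := hbd n
    exact hn i hi
  obtain ⟨i0, hi0⟩ := hfreq
  obtain ⟨φ, hφmono, hφ⟩ := extraction_of_frequently_atTop hi0
  -- compactness in EReal
  obtain ⟨aL, φ2, hφ2mono, hconv⟩ :=
    SeqCompactSpace.tendsto_subseq (fun n (i : Fin k) => ((c (φ n) i : ℝ) : EReal))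
  set b : ℕ → Fin k → ℝ := fun n => c (φ (φ2 n)) with hbdef
  have hcomp : ∀ i, Tendsto (fun n => ((b n i : ℝ) : EReal)) atTop (𝓝 (aL i)) :=
    fun i => (tendsto_pi_nhds.1 hconv i)
  have hb_i0 : ∀ n, |b n i0| ≤ B := fun n => hφ (φ2 n)
  have hi0fin : ¬(aL i0 = ⊤ ∨ aL i0 = ⊥) := by
    have hmem : ∀ n, ((b n i0 : ℝ) : EReal) ∈ Set.Icc ((-B : ℝ) : EReal) ((B : ℝ) : EReal) := by
      intro n
      constructor
      · exact_mod_cast (abs_le.1 (hb_i0 n)).1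
      · exact_mod_cast (abs_le.1 (hb_i0 n)).2
    have hlim := isClosed_Icc.mem_of_tendsto (hcomp i0) (Eventually.of_forall hmem)
    rintro (h | h) <;> rw [h] at hlim
    · exact absurd hlim.2 (by simp)
    · exact absurd hlim.1 (by simp)
  set Sfin : Finset (Fin k) := Finset.univ.filter (fun i => ¬(aL i = ⊤ ∨ aL i = ⊥))
    with hSfin
  have hi0S : i0 ∈ Sfin := Finset.mem_filter.2 ⟨Finset.mem_univ _, hi0fin⟩
  have hSne : Sfin.Nonempty := ⟨i0, hi0S⟩
  set d : Fin k → ℝ := fun i => if aL i = ⊤ ∨ aL i = ⊥ then (aL i0).toReal else (aL i).toReal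
    with hd
  have hfin_conv : ∀ i ∈ Sfin, Tendsto (fun n => b n i) atTop (𝓝 (d i)) := by
    intro i hi
    have hi' := (Finset.mem_filter.1 hi).2
    push_neg at hi'
    have hcoe : aL i = ((aL i).toReal : EReal) := (EReal.coe_toReal hi'.1 hi'.2).symm
    have : d i = (aL i).toReal := if_neg (by tauto)
    rw [this]
    exact EReal.tendsto_coe.1 (hcoe ▸ hcomp i)
  have hinf_conv : ∀ i ∉ Sfin, ∀ t : ℝ, Tendsto (fun n => |t - b n i|) atTop atTop := by
    intro i hi t
    have hi' : aL i = ⊤ ∨ aL i = ⊥ := by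
      by_contra h
      exact hi (Finset.mem_filter.2 ⟨Finset.mem_univ _, h⟩)
    cases hi' with
    | inl h =>
      have htop : Tendsto (fun n => b n i) atTop atTop := by
        rw [tendsto_atTop]
        intro x
        have := (EReal.tendsto_nhds_top_iff_real.1 (h ▸ hcomp i)) x
        filter_upwards [this] with n hn
        exact_mod_cast hn.le
      have hge : ∀ n, b n i - t ≤ |t - b n i| := fun n => by
        rw [abs_sub_comm]; exact le_abs_self _
      exact tendsto_atTop_mono hge (htop.atTop_add tendsto_const_nhds)
    | inr h =>
      have hbot : Tendsto (fun n => b n i) atTop atBot := by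
        rw [tendsto_atBot]
        intro x
        have := (EReal.tendsto_nhds_bot_iff_real.1 (h ▸ hcomp i)) x
        filter_upwards [this] with n hn
        exact_mod_cast hn.le
      have hge : ∀ n, t - b n i ≤ |t - b n i| := fun n => le_abs_self _
      have : Tendsto (fun n => t - b n i) atTop atTop :=
        tendsto_const_nhds.add_atTop (tendsto_neg_atBot_atTop.comp hbot)
      refine tendsto_atTop_mono hge (by simpa [sub_eq_add_neg] using this)
  -- the limit min-distance function
  set Lfun : ℝ → ℝ := fun t => Sfin.inf' hSne (fun i => |t - d i|) with hLfun
  have hminconv : ∀ t, Tendsto (fun n => GpkAux.minv hk (b n) t) atTop (𝓝 (Lfun t)) := by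
    intro t
    have hcont : Continuous (fun v : Fin k → ℝ => Sfin.inf' hSne fun i => |t - v i|) :=
      Continuous.finset_inf'_apply hSne fun i _ =>
        (continuous_const.sub (continuous_apply i)).abs
    have hvec : Tendsto (fun n => fun i => if i ∈ Sfin then b n i else 0) atTop
        (𝓝 (fun i => if i ∈ Sfin then d i else 0)) := by
      refine tendsto_pi_nhds.2 fun i => ?_
      by_cases hi : i ∈ Sfin
      · simpa [hi] using hfin_conv i hi
      · simpa [hi] using (tendsto_const_nhds : Tendsto (fun _ : ℕ => (0:ℝ)) atTop _)
    have ha : Tendsto (fun n => Sfin.inf' hSne fun i => |t - b n i|) atTop (𝓝 (Lfun t)) := by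
      have h1 : Tendsto (fun n => Sfin.inf' hSne fun i => |t - (if i ∈ Sfin then b n i else 0)|)
          atTop (𝓝 (Sfin.inf' hSne fun i => |t - (if i ∈ Sfin then d i else 0)|)) :=
        (hcont.tendsto _).comp hvec
      have e1 : ∀ n, (Sfin.inf' hSne fun i => |t - (if i ∈ Sfin then b n i else 0)|)
          = Sfin.inf' hSne fun i => |t - b n i| :=
        fun n => Finset.inf'_congr _ rfl fun i hi => by rw [if_pos hi]
      have e2 : (Sfin.inf' hSne fun i => |t - (if i ∈ Sfin then d i else 0)|) = Lfun t :=
        Finset.inf'_congr _ rfl fun i hi => by rw [if_pos hi]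
      rw [e2] at h1
      exact h1.congr e1
    have hev : ∀ᶠ n in atTop,
        GpkAux.minv hk (b n) t = Sfin.inf' hSne fun i => |t - b n i| := by
      have h2 : ∀ᶠ n in atTop, ∀ i, i ∉ Sfin → Lfun t + 1 ≤ |t - b n i| := by
        rw [eventually_all]
        intro i
        by_cases hi : i ∈ Sfin
        · exact Eventually.of_forall fun n h => absurd hi h
        · exact ((hinf_conv i hi t).eventually_ge_atTop _).mono fun n h _ => h
      have h3 : ∀ᶠ n in atTop, (Sfin.inf' hSne fun i => |t - b n i|) ≤ Lfun t + 1 :=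
        ha.eventually (eventually_le_nhds (lt_add_one _))
      filter_upwards [h2, h3] with n h2n h3n
      apply le_antisymm
      · exact Finset.le_inf' _ _ fun i _ => GpkAux.minv_le hk (b n) t i
      · refine GpkAux.le_minv fun i => ?_
        by_cases hi : i ∈ Sfin
        · exact Finset.inf'_le _ hi
        · exact h3n.trans (h2n i hi)
    exact Tendsto.congr' (EventuallyEq.symm hev) ha
  -- Fatou
  have hFatou := Lp.eLpNorm_lim_le_liminf_eLpNorm (μ := μ) (p := p)
    (f := fun n x => GpkAux.minv hk (b n) (f₀ x))
    (fun n => (((GpkAux.continuous_minv hk (b n)).measurable).comp hf₀m).aestronglyMeasurable)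
    (fun x => Lfun (f₀ x))
    (Eventually.of_forall fun x => hminconv (f₀ x))
  have hnorm_eq : ∀ n, eLpNorm (fun x => GpkAux.minv hk (b n) (f₀ x)) p μ
      = eLpNorm (fun x => f₀ x - GpkAux.proj hk (b n) (f₀ x)) p μ := by
    intro n
    rw [← eLpNorm_norm (fun x => f₀ x - GpkAux.proj hk (b n) (f₀ x))]
    congr 1
    funext x
    rw [Real.norm_eq_abs, GpkAux.abs_sub_proj]
  have hlim : Tendsto (fun n => eLpNorm (fun x => f₀ x - GpkAux.proj hk (b n) (f₀ x)) p μ)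
      atTop (𝓝 (ENNReal.ofReal m)) := by
    have h1 : Tendsto (fun n => ‖f - Gc (b n)‖) atTop (𝓝 m) :=
      hten.comp ((hφmono.comp hφ2mono).tendsto_atTop)
    have h2 : ∀ n, eLpNorm (fun x => f₀ x - GpkAux.proj hk (b n) (f₀ x)) p μ
        = ENNReal.ofReal ‖f - Gc (b n)‖ := fun n => by
      rw [normG]
      exact (ENNReal.ofReal_toReal (hGfin _)).symm
    exact (ENNReal.tendsto_ofReal h1).congr (fun n => (h2 n).symm)
  have hliminf : (atTop.liminf fun n => eLpNorm (fun x => GpkAux.minv hk (b n) (f₀ x)) p μ)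
      = ENNReal.ofReal m := by
    simp_rw [hnorm_eq]
    exact hlim.liminf_eq
  rw [hliminf] at hFatou
  -- conclude
  have hdle : eLpNorm (fun x => f₀ x - GpkAux.proj hk d (f₀ x)) p μ
      ≤ eLpNorm (fun x => Lfun (f₀ x)) p μ := by
    refine eLpNorm_mono_ae (Eventually.of_forall fun x => ?_)
    rw [Real.norm_eq_abs, GpkAux.abs_sub_proj, Real.norm_eq_abs]
    refine le_trans ?_ (le_abs_self _)
    exact Finset.le_inf' _ _ fun i _ => GpkAux.minv_le hk d (f₀ x) i
  refine ⟨Gc d, hGmem d, le_antisymm ?_ (hmlb d)⟩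
  rw [normG]
  have := ENNReal.toReal_mono (by simp) (hdle.trans hFatou)
  rwa [ENNReal.toReal_ofReal hm0] at this
end

section
/- For any measure space (Ω,𝓕,μ) and k ≥ 1, the set 𝒢_{∞,k} of simple measurable functions taking at most k values is proximinal in L^∞(Ω,𝓕,μ). -/
open MeasureTheory ENNReal Filter Topology

variable {Ω : Type*} [MeasurableSpace Ω]

/-- a.e. bound for `L∞` functions by their norm. -/
lemma linf_ae_le {μ : MeasureTheory.Measure Ω} (h : Lp ℝ ⊤ μ) :
    ∀ᵐ x ∂μ, ‖(h : Ω → ℝ) x‖ ≤ ‖h‖ := by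
  have h1 : ∀ᵐ x ∂μ, (‖(h : Ω → ℝ) x‖₊ : ℝ≥0∞) ≤ eLpNormEssSup (h : Ω → ℝ) μ :=
    ae_le_eLpNormEssSup
  have hfin : eLpNormEssSup (h : Ω → ℝ) μ ≠ ⊤ := by
    have := Lp.eLpNorm_ne_top h
    rwa [eLpNorm_exponent_top] at this
  filter_upwards [h1] with x hx
  have : ((‖(h : Ω → ℝ) x‖₊ : ℝ≥0∞)).toReal ≤ (eLpNormEssSup (h : Ω → ℝ) μ).toReal :=
    ENNReal.toReal_mono hfin hx
  simpa [Lp.norm_def, eLpNorm_exponent_top] using this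

/-- a.e. bound for a difference of `L∞` functions by the norm of the difference. -/
lemma linf_ae_le_sub {μ : MeasureTheory.Measure Ω} (h₁ h₂ : Lp ℝ ⊤ μ) :
    ∀ᵐ x ∂μ, ‖(h₁ : Ω → ℝ) x - (h₂ : Ω → ℝ) x‖ ≤ ‖h₁ - h₂‖ := by
  filter_upwards [linf_ae_le (h₁ - h₂), Lp.coeFn_sub h₁ h₂] with x hx h
  rw [h] at hx
  simpa using hx

/-- Norm bound for `L∞` functions from an a.e. bound. -/
lemma linf_norm_le {μ : MeasureTheory.Measure Ω} (h : Lp ℝ ⊤ μ) {C : ℝ} (hC : 0 ≤ C)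
    (hb : ∀ᵐ x ∂μ, ‖(h : Ω → ℝ) x‖ ≤ C) : ‖h‖ ≤ C := by
  have h1 : eLpNormEssSup (h : Ω → ℝ) μ ≤ ENNReal.ofReal C :=
    eLpNormEssSup_le_of_ae_bound hb
  have := ENNReal.toReal_mono (by simp) h1
  rw [ENNReal.toReal_ofReal hC] at this
  simpa [Lp.norm_def, eLpNorm_exponent_top] using this

/-- Norm bound for a difference of `L∞` functions from an a.e. bound. -/
lemma linf_norm_le_sub {μ : MeasureTheory.Measure Ω} (h₁ h₂ : Lp ℝ ⊤ μ) {C : ℝ} (hC : 0 ≤ C)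
    (hb : ∀ᵐ x ∂μ, ‖(h₁ : Ω → ℝ) x - (h₂ : Ω → ℝ) x‖ ≤ C) : ‖h₁ - h₂‖ ≤ C := by
  apply linf_norm_le _ hC
  filter_upwards [Lp.coeFn_sub h₁ h₂, hb] with x h hx
  rw [h]
  simpa using hx

/-- Measurable nearest-point selection for a finite family of points in `ℝ`. -/
lemma nearest_selection {k : ℕ} (hk : 0 < k) (a : Fin k → ℝ) :
    ∃ g : ℝ → ℝ, Measurable g ∧ (∀ t, ∃ i, g t = a i) ∧ ∀ t i, |t - g t| ≤ |t - a i| := by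
  haveI : Nonempty (Fin k) := ⟨⟨0, hk⟩⟩
  classical
  set m : ℝ → ℝ := fun t => ⨅ i, |t - a i| with hm
  have hmle : ∀ t i, m t ≤ |t - a i| := fun t i =>
    ciInf_le (Set.Finite.bddBelow (Set.finite_range _)) i
  have hmex : ∀ t, ∃ i, m t = |t - a i| := by
    intro t
    obtain ⟨i, hi⟩ := Finite.exists_min (fun i => |t - a i|)
    exact ⟨i, le_antisymm (hmle t i) (le_ciInf hi)⟩
  have hmcont : Continuous m := by
    have heq : ∀ t, m t = Finset.univ.inf' (Finset.univ_nonempty) (fun i => |t - a i|) := by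
      intro t
      apply le_antisymm
      · obtain ⟨i, _, hi⟩ := Finset.exists_mem_eq_inf' (Finset.univ_nonempty)
          (fun i => |t - a i|)
        rw [hi]; exact hmle t i
      · obtain ⟨i, hi⟩ := hmex t
        rw [hi]; exact Finset.inf'_le _ (Finset.mem_univ i)
    rw [show m = fun t => Finset.univ.inf' (Finset.univ_nonempty) (fun i => |t - a i|) from
      funext heq]
    exact Continuous.finset_inf'_apply Finset.univ_nonempty fun i _ =>
      (continuous_id.sub continuous_const).abs
  set a' : ℕ → ℝ := fun n => a ⟨n % k, Nat.mod_lt n hk⟩ with ha'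
  have hex : ∀ t, ∃ n, |t - a' n| ≤ m t := by
    intro t
    obtain ⟨i, hi⟩ := hmex t
    refine ⟨i.val, ?_⟩
    have : a' i.val = a i := by
      simp [ha', Nat.mod_eq_of_lt i.isLt]
    rw [this, ← hi]
  have hmeas : ∀ n : ℕ, MeasurableSet {t : ℝ | |t - a' n| ≤ m t} :=
    fun n => measurableSet_le ((continuous_id.sub continuous_const).abs).measurable
      hmcont.measurable
  refine ⟨fun t => a' (Nat.find (hex t)), ?_, ?_, ?_⟩
  · exact Measurable.find (f := fun n (_ : ℝ) => a' n) (fun n => measurable_const) hmeas hex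
  · intro t
    exact ⟨⟨(Nat.find (hex t)) % k, Nat.mod_lt _ hk⟩, rfl⟩
  · intro t i
    exact le_trans (Nat.find_spec (hex t)) (hmle t i)

theorem Gpk_proximinal_top (μ : MeasureTheory.Measure Ω) (k : ℕ) (hk : 1 ≤ k)
    (f : Lp ℝ ⊤ μ) :
    ∃ g ∈ Gpk ⊤ μ k, ‖f - g‖ = Metric.infDist f (Gpk ⊤ μ k) := by
  classical
  have hk' : 0 < k := hk
  haveI : Nonempty (Fin k) := ⟨⟨0, hk'⟩⟩
  -- measurable representative of f
  have hfm := Lp.aestronglyMeasurable f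
  set F : Ω → ℝ := hfm.mk f with hFdef
  have hFmeas : Measurable F := hfm.stronglyMeasurable_mk.measurable
  have hFae : (f : Ω → ℝ) =ᵐ[μ] F := hfm.ae_eq_mk
  set C : ℝ := ‖f‖ with hC
  have hC0 : 0 ≤ C := norm_nonneg f
  have hFC : ∀ᵐ x ∂μ, |F x| ≤ C := by
    filter_upwards [hFae, linf_ae_le f] with x h1 h2
    rw [← h1]; exact h2
  -- nearest point selections
  choose sel hselm hselv hseln using fun a : Fin k → ℝ => nearest_selection hk' a
  set G : (Fin k → ℝ) → Ω → ℝ := fun a x => sel a (F x) with hG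
  have hGmeas : ∀ a, Measurable (G a) := fun a => (hselm a).comp hFmeas
  have hGbd : ∀ a, ∃ B, ∀ x, ‖G a x‖ ≤ B := by
    intro a
    refine ⟨Finset.univ.sup' Finset.univ_nonempty (fun i => |a i|), fun x => ?_⟩
    obtain ⟨i, hi⟩ := hselv a (F x)
    rw [hG]; simp only [hi]
    exact Finset.le_sup' (fun i => |a i|) (Finset.mem_univ i)
  have hGmem : ∀ a, MemLp (G a) ⊤ μ := by
    intro a
    obtain ⟨B, hB⟩ := hGbd a
    exact memLp_top_of_bound (hGmeas a).aestronglyMeasurable B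
      (Eventually.of_forall hB)
  set ga : (Fin k → ℝ) → Lp ℝ ⊤ μ := fun a => (hGmem a).toLp (G a) with hga
  have hgaae : ∀ a, (ga a : Ω → ℝ) =ᵐ[μ] G a := fun a => (hGmem a).coeFn_toLp
  have hgamem : ∀ a, ga a ∈ Gpk ⊤ μ k := by
    intro a
    refine ⟨G a, ⟨hGmeas a, Finset.image a Finset.univ, ?_, ?_⟩, hgaae a⟩
    · exact le_trans Finset.card_image_le (by simp)
    · intro x
      obtain ⟨i, hi⟩ := hselv a (F x)
      rw [hG]; simp only [hi]
      exact Finset.mem_image_of_mem a (Finset.mem_univ i)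
  set Φ : (Fin k → ℝ) → ℝ := fun a => ‖f - ga a‖ with hΦ
  -- Step: Φ a ≤ Φ b + d if all |a i - b i| ≤ d
  have hlip : ∀ a b : Fin k → ℝ, ∀ d : ℝ, 0 ≤ d → (∀ i, |a i - b i| ≤ d) →
      Φ a ≤ Φ b + d := by
    intro a b d hd hdi
    have hΦb : 0 ≤ Φ b := norm_nonneg _
    apply linf_norm_le_sub f (ga a) (by linarith)
    filter_upwards [hFae, hgaae a, hgaae b, linf_ae_le_sub f (ga b)] with x h2 h3 h5 h4
    rw [Real.norm_eq_abs, h2, h3]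
    obtain ⟨i, hi⟩ := hselv b (F x)
    have step1 : |F x - G a x| ≤ |F x - a i| := hseln a (F x) i
    have step2 : |F x - a i| ≤ |F x - b i| + |b i - a i| := abs_sub_le (F x) (b i) (a i)
    have step3 : |b i - a i| ≤ d := by rw [abs_sub_comm]; exact hdi i
    have step4 : |F x - b i| = |F x - G b x| := by rw [hG]; simp [hi]
    have step5 : |F x - G b x| ≤ Φ b := by
      rw [Real.norm_eq_abs, h2, h5] at h4; exact h4
    linarith
  have hcont : Continuous Φ := by
    have : LipschitzWith 1 Φ := by
      apply LipschitzWith.of_dist_le_mul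
      intro a b
      rw [NNReal.coe_one, one_mul, Real.dist_eq, abs_sub_le_iff]
      have hd : ∀ i, |a i - b i| ≤ dist a b := fun i => by
        simpa [Real.dist_eq] using dist_le_pi_dist a b i
      have hd' : ∀ i, |b i - a i| ≤ dist a b := fun i => by
        rw [abs_sub_comm]; exact hd i
      constructor
      · linarith [hlip a b (dist a b) dist_nonneg hd]
      · linarith [hlip b a (dist a b) dist_nonneg hd']
    exact this.continuous
  -- Step: any member of Gpk dominated by some Φ b
  have hdom : ∀ h ∈ Gpk ⊤ μ k, ∃ b : Fin k → ℝ, Φ b ≤ dist f h := by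
    rintro h ⟨g0, ⟨hg0m, s, hcard, hmem⟩, hae⟩
    obtain ⟨s', hss', hcard'⟩ := Infinite.exists_superset_card_eq s k hcard
    set e := s'.equivFin
    set b : Fin k → ℝ := fun i => (e.symm (Fin.cast hcard'.symm i) : ℝ) with hb
    have hbs : ∀ y ∈ s, ∃ i : Fin k, b i = y := by
      intro y hy
      refine ⟨Fin.cast hcard' (e ⟨y, hss' hy⟩), ?_⟩
      simp [hb]
    refine ⟨b, ?_⟩
    rw [dist_eq_norm]
    apply linf_norm_le_sub f (ga b) (norm_nonneg _)
    filter_upwards [hFae, hgaae b, hae, linf_ae_le_sub f h] with x h2 h3 h0 h4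
    rw [Real.norm_eq_abs, h2, h3]
    obtain ⟨i, hi⟩ := hbs (g0 x) (hmem x)
    calc |F x - G b x| ≤ |F x - b i| := hseln b (F x) i
      _ = |F x - g0 x| := by rw [hi]
      _ ≤ ‖f - h‖ := by
          rw [Real.norm_eq_abs, h2, h0] at h4; exact h4
  -- projection to the cube [-C, C]^k
  set proj : ℝ → ℝ := fun y => max (-C) (min C y) with hproj
  have hprojIcc : ∀ y, proj y ∈ Set.Icc (-C) C := by
    intro y
    constructor
    · exact le_max_left _ _
    · exact max_le (by linarith) (min_le_left _ _)
  have hprojle : ∀ t y, |t| ≤ C → |t - proj y| ≤ |t - y| := by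
    intro t y ht
    rw [abs_le] at ht
    rcases le_total y (-C) with h | h
    · have : proj y = -C := by
        rw [hproj]; simp only
        rw [min_eq_right (by linarith), max_eq_left (by linarith)]
      rw [this, abs_of_nonneg (by linarith), abs_of_nonneg (by linarith)]
      linarith
    · rcases le_total C y with h2 | h2
      · have : proj y = C := by
          rw [hproj]; simp only
          rw [min_eq_left h2, max_eq_right (by linarith)]
        rw [this, abs_of_nonpos (by linarith), abs_of_nonpos (by linarith)]
        linarith
      · have : proj y = y := by
          rw [hproj]; simp only
          rw [min_eq_right h2, max_eq_right h]
        rw [this]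
  have hprojΦ : ∀ a : Fin k → ℝ, Φ (fun i => proj (a i)) ≤ Φ a := by
    intro a
    apply linf_norm_le_sub f (ga (fun i => proj (a i))) (norm_nonneg _)
    filter_upwards [hFae, hgaae (fun i => proj (a i)), hgaae a, hFC,
      linf_ae_le_sub f (ga a)] with x h2 h3 h3' h5 h4
    rw [Real.norm_eq_abs, h2, h3]
    obtain ⟨i, hi⟩ := hselv a (F x)
    calc |F x - G (fun i => proj (a i)) x| ≤ |F x - proj (a i)| :=
          hseln (fun i => proj (a i)) (F x) i
      _ ≤ |F x - a i| := hprojle (F x) (a i) h5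
      _ = |F x - G a x| := by rw [hG]; simp [hi]
      _ ≤ Φ a := by rw [Real.norm_eq_abs, h2, h3'] at h4; exact h4
  -- compactness
  set K : Set (Fin k → ℝ) := Set.univ.pi fun _ => Set.Icc (-C) C with hK
  have hKcomp : IsCompact K := isCompact_univ_pi fun _ => isCompact_Icc
  have hKne : K.Nonempty :=
    ⟨fun _ => 0, fun i _ => ⟨by simpa using neg_nonpos.mpr hC0, by simpa using hC0⟩⟩
  obtain ⟨astar, hastar, hmin⟩ := hKcomp.exists_isMinOn hKne hcont.continuousOn
  refine ⟨ga astar, hgamem astar, ?_⟩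
  have hle : ∀ h ∈ Gpk ⊤ μ k, Φ astar ≤ dist f h := by
    intro h hh
    obtain ⟨b, hb⟩ := hdom h hh
    have hb' : (fun i => proj (b i)) ∈ K := fun i _ => hprojIcc (b i)
    calc Φ astar ≤ Φ (fun i => proj (b i)) := hmin hb'
      _ ≤ Φ b := hprojΦ b
      _ ≤ dist f h := hb
  apply le_antisymm
  · by_contra hlt
    push_neg at hlt
    obtain ⟨y, hy, hdy⟩ := (Metric.infDist_lt_iff ⟨ga astar, hgamem astar⟩).mp hlt
    exact absurd hdy (not_lt.mpr (hle y hy))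
  · have := Metric.infDist_le_dist_of_mem (x := f) (hgamem astar)
    rwa [dist_eq_norm] at this
end

section
/- In ℓ^p (1 ≤ p < ∞), for every k ≥ 1 the set 𝒢_{p,k} of sequences in ℓ^p taking at most k distinct values is weakly closed. -/
open MeasureTheory ENNReal Filter Topology

variable {Ω : Type*} [MeasurableSpace Ω]

/-- a.e. equality w.r.t. the counting measure is equality. -/
lemma ae_count_eq {f g : ℕ → ℝ}
    (h : f =ᵐ[(MeasureTheory.Measure.count : MeasureTheory.Measure ℕ)] g) : f = g := by
  have h0 : (MeasureTheory.Measure.count : MeasureTheory.Measure ℕ) {x | ¬ f x = g x} = 0 :=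
    MeasureTheory.ae_iff.mp h
  have h1 : ({x | ¬ f x = g x} : Set ℕ) = ∅ := Measure.count_eq_zero_iff.mp h0
  funext x
  by_contra hx
  exact absurd (Set.eq_empty_iff_forall_notMem.mp h1 x) (fun h' => h' hx)

/-- Pointwise evaluation bound in `ℓ^p`. -/
lemma eval_norm_le (p : ℝ≥0∞) [Fact (1 ≤ p)] (hp : p ≠ ∞)
    (f : Lp ℝ p (MeasureTheory.Measure.count : MeasureTheory.Measure ℕ)) (n : ℕ) :
    ‖(f : ℕ → ℝ) n‖ ≤ ‖f‖ := by
  have hp1 : 1 ≤ p := Fact.out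
  have hp0 : p ≠ 0 := by
    intro h; rw [h] at hp1; exact absurd (le_antisymm (le_of_le_of_eq hp1 rfl) bot_le) one_ne_zero
  have hq : 0 < p.toReal := ENNReal.toReal_pos hp0 hp
  have h1 : (‖(f : ℕ → ℝ) n‖₊ : ℝ≥0∞) ≤ eLpNorm (f : ℕ → ℝ) p Measure.count := by
    rw [eLpNorm_eq_lintegral_rpow_enorm_toReal hp0 hp, lintegral_count]
    have h2 : ((‖(f : ℕ → ℝ) n‖₊ : ℝ≥0∞) ^ p.toReal) ≤
        ∑' m, (‖(f : ℕ → ℝ) m‖₊ : ℝ≥0∞) ^ p.toReal := ENNReal.le_tsum n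
    calc (‖(f : ℕ → ℝ) n‖₊ : ℝ≥0∞)
        = (((‖(f : ℕ → ℝ) n‖₊ : ℝ≥0∞) ^ p.toReal) ^ (1 / p.toReal)) := by
          rw [one_div, ENNReal.rpow_rpow_inv hq.ne']
      _ ≤ (∑' m, (‖(f : ℕ → ℝ) m‖₊ : ℝ≥0∞) ^ p.toReal) ^ (1 / p.toReal) :=
          ENNReal.rpow_le_rpow h2 (by positivity)
  have hne : eLpNorm (f : ℕ → ℝ) p Measure.count ≠ ∞ := (Lp.eLpNorm_lt_top f).ne
  have := ENNReal.toReal_mono hne h1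
  simpa [Lp.norm_def] using this

/-- Pointwise evaluation as a continuous linear functional on `ℓ^p`. -/
noncomputable def evalCLM (p : ℝ≥0∞) [Fact (1 ≤ p)] (hp : p ≠ ∞) (n : ℕ) :
    Lp ℝ p (MeasureTheory.Measure.count : MeasureTheory.Measure ℕ) →L[ℝ] ℝ :=
  LinearMap.mkContinuous
    { toFun := fun f => (f : ℕ → ℝ) n
      map_add' := fun f g => by
        have := congrFun (ae_count_eq (Lp.coeFn_add f g)) n
        simpa using this
      map_smul' := fun c f => by
        have := congrFun (ae_count_eq (Lp.coeFn_smul c f)) n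
        simpa using this }
    1 (fun f => by simpa using eval_norm_le p hp f n)

lemma eval_weak_continuous (p : ℝ≥0∞) [Fact (1 ≤ p)] (hp : p ≠ ∞) (n : ℕ) :
    Continuous fun f : WeakSpace ℝ (Lp ℝ p (MeasureTheory.Measure.count : MeasureTheory.Measure ℕ)) =>
      evalCLM p hp n f :=
  WeakBilin.eval_continuous
    (topDualPairing ℝ (Lp ℝ p (MeasureTheory.Measure.count : MeasureTheory.Measure ℕ))).flip
    (evalCLM p hp n)

/-- Membership in `Gpk` over the counting measure, characterized via tuples. -/
lemma mem_Gpk_count_iff (p : ℝ≥0∞) [Fact (1 ≤ p)] (k : ℕ)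
    (f : Lp ℝ p (MeasureTheory.Measure.count : MeasureTheory.Measure ℕ)) :
    f ∈ Gpk p MeasureTheory.Measure.count k ↔
      ∀ n : Fin (k + 1) → ℕ, ¬ Function.Injective fun j => (f : ℕ → ℝ) (n j) := by
  constructor
  · rintro ⟨g, ⟨-, s, hs, hmem⟩, hae⟩ n hinj
    have hfg : (f : ℕ → ℝ) = g := ae_count_eq hae
    have hcard : (Finset.univ.image fun j => (f : ℕ → ℝ) (n j)).card = k + 1 := by
      rw [Finset.card_image_of_injective _ hinj, Finset.card_univ, Fintype.card_fin]
    have hsub : (Finset.univ.image fun j => (f : ℕ → ℝ) (n j)) ⊆ s := by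
      intro v hv
      simp only [Finset.mem_image, Finset.mem_univ, true_and] at hv
      obtain ⟨j, rfl⟩ := hv
      rw [hfg]; exact hmem _
    have := Finset.card_le_card hsub
    omega
  · intro h
    have hbig : ∀ t : Finset ℝ, ↑t ⊆ Set.range (f : ℕ → ℝ) → t.card ≠ k + 1 := by
      intro t hts hcard
      have e : Fin (k + 1) ≃ t := (t.equivFinOfCardEq hcard).symm
      have hchoice : ∀ j : Fin (k + 1), ∃ m : ℕ, (f : ℕ → ℝ) m = (e j : ℝ) := by
        intro j; exact hts (e j).2
      choose n hn using hchoice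
      refine h n ?_
      intro j1 j2 h12
      have : (e j1 : ℝ) = (e j2 : ℝ) := by rw [← hn j1, ← hn j2]; exact h12
      exact e.injective (Subtype.ext this)
    have hfin : (Set.range (f : ℕ → ℝ)).Finite := by
      by_contra hinf
      obtain ⟨t, hts, htc⟩ := Set.Infinite.exists_subset_card_eq hinf (k + 1)
      exact hbig t hts htc
    have hcardle : hfin.toFinset.card ≤ k := by
      by_contra hgt
      obtain ⟨t, hts, htc⟩ := Finset.exists_subset_card_eq (by omega : k + 1 ≤ hfin.toFinset.card)
      refine hbig t ?_ htc
      intro v hv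
      have := hts hv
      rwa [Set.Finite.mem_toFinset] at this
    refine ⟨(f : ℕ → ℝ), ⟨?_, hfin.toFinset, hcardle, ?_⟩, Filter.EventuallyEq.refl _ _⟩
    · exact measurable_from_top
    · intro x; rw [Set.Finite.mem_toFinset]; exact Set.mem_range_self x

theorem Gpk_weaklyClosed_count (p : ℝ≥0∞) [Fact (1 ≤ p)] (hp : p ≠ ∞) (k : ℕ) (hk : 1 ≤ k) :
    IsClosed (show Set (WeakSpace ℝ (Lp ℝ p (MeasureTheory.Measure.count : MeasureTheory.Measure ℕ))) from
      Gpk p MeasureTheory.Measure.count k) := by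
  have hset : (show Set (WeakSpace ℝ (Lp ℝ p (MeasureTheory.Measure.count : MeasureTheory.Measure ℕ))) from
      Gpk p MeasureTheory.Measure.count k) =
      ⋂ n : Fin (k + 1) → ℕ,
        {f : WeakSpace ℝ (Lp ℝ p (MeasureTheory.Measure.count : MeasureTheory.Measure ℕ)) |
          Function.Injective fun j => evalCLM p hp (n j) f}ᶜ := by
    ext f
    rw [Set.mem_iInter]
    refine (mem_Gpk_count_iff p k f).trans ?_
    constructor
    · intro h n; exact h n
    · intro h n; exact h n
  rw [hset]
  refine isClosed_iInter fun n => ?_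
  refine IsOpen.isClosed_compl ?_
  have hc : Continuous fun
      (f : WeakSpace ℝ (Lp ℝ p (MeasureTheory.Measure.count : MeasureTheory.Measure ℕ))) =>
      fun j : Fin (k + 1) => evalCLM p hp (n j) f :=
    continuous_pi fun j => eval_weak_continuous p hp (n j)
  have hOpen : IsOpen {v : Fin (k + 1) → ℝ | Function.Injective v} := by
    have hEq : {v : Fin (k + 1) → ℝ | Function.Injective v} =
        ⋂ (i : Fin (k + 1)) (j : Fin (k + 1)) (_ : i ≠ j), {v : Fin (k + 1) → ℝ | v i ≠ v j} := by
      ext v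
      simp only [Set.mem_setOf_eq, Set.mem_iInter]
      constructor
      · intro hv i j hij hvij; exact hij (hv hvij)
      · intro hv a b hab; by_contra hne; exact hv a b hne hab
    rw [hEq]
    exact isOpen_iInter_of_finite fun i => isOpen_iInter_of_finite fun j =>
      isOpen_iInter_of_finite fun _ => isOpen_ne_fun (continuous_apply i) (continuous_apply j)
  exact hOpen.preimage hc
end

section
/- Let (Ω,𝓕,μ) be a finite measure space, p ∈ [1,∞), f ∈ L^p, and k ≥ 1. Then there exists a sequence (g_n) in 𝒢_{p,k}, uniformly bounded in sup norm by a constant, such that ‖f−g_n‖_p converges to the distance 𝒟_{p,k}(f) from f to 𝒢_{p,k}. -/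
open MeasureTheory ENNReal Filter Topology

variable {Ω : Type*} [MeasurableSpace Ω]

/-- The nearest point of a (nonempty) list, with ties broken towards the head. -/
noncomputable def near : List ℝ → ℝ → ℝ
  | [], _ => 0
  | [a], _ => a
  | a :: b :: l, t => if |t - a| ≤ |t - near (b :: l) t| then a else near (b :: l) t

lemma near_mem : ∀ (L : List ℝ), L ≠ [] → ∀ t, near L t ∈ L
  | [], h, _ => absurd rfl h
  | [a], _, t => by simp [near]
  | a :: b :: l, _, t => by
    rw [near]
    split
    · exact List.mem_cons_self
    · exact List.mem_cons_of_mem _ (near_mem (b :: l) (by simp) t)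

lemma near_le : ∀ (L : List ℝ), ∀ t : ℝ, ∀ c ∈ L, |t - near L t| ≤ |t - c|
  | [], _, c, hc => absurd hc List.not_mem_nil
  | [a], t, c, hc => by
    simp only [List.mem_singleton] at hc
    subst hc; simp [near]
  | a :: b :: l, t, c, hc => by
    rw [near]
    rcases List.mem_cons.mp hc with rfl | hc
    · split
      · exact le_refl _
      · exact le_of_lt (lt_of_not_ge (by assumption))
    · have h2 := near_le (b :: l) t c hc
      split
      · exact le_trans (by assumption) h2
      · exact h2

lemma measurable_near : ∀ (L : List ℝ), Measurable (near L)
  | [] => by simp only [near]; exact measurable_const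
  | [a] => by simp only [near]; exact measurable_const
  | a :: b :: l => by
    have ih := measurable_near (b :: l)
    have hcond : MeasurableSet {t : ℝ | |t - a| ≤ |t - near (b :: l) t|} :=
      measurableSet_le (by fun_prop) ((measurable_id.sub ih).abs)
    have : near (a :: b :: l) = fun t =>
        if |t - a| ≤ |t - near (b :: l) t| then a else near (b :: l) t := by
      funext t; rw [near]
    rw [this]
    exact Measurable.ite hcond measurable_const ih

lemma near_abs_le (L : List ℝ) (t : ℝ) : |near L t| ≤ (L.map abs).sum := by
  cases L with
  | nil => simp [near]
  | cons a l =>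
    have hm : near (a :: l) t ∈ a :: l := near_mem _ (by simp) t
    have hmem : |near (a :: l) t| ∈ (a :: l).map abs := List.mem_map_of_mem (f := abs) hm
    refine List.single_le_sum (fun x hx => ?_) _ hmem
    rcases List.mem_map.mp hx with ⟨y, _, rfl⟩
    exact abs_nonneg y

set_option maxHeartbeats 1600000 in
theorem exists_uniformlyBounded_minimizing_sequence (μ : MeasureTheory.Measure Ω)
    [IsFiniteMeasure μ] (p : ℝ≥0∞) [Fact (1 ≤ p)] (hp : p ≠ ∞)
    (f : Lp ℝ p μ) (k : ℕ) (hk : 1 ≤ k) :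
    ∃ (g : ℕ → Lp ℝ p μ) (C : ℝ), (∀ n, g n ∈ Gpk p μ k) ∧
      (∀ n, ∀ᵐ x ∂μ, |(g n : Ω → ℝ) x| ≤ C) ∧
      Tendsto (fun n => ‖f - g n‖) atTop (𝓝 (Metric.infDist f (Gpk p μ k))) := by
  have hp1 : (1 : ℝ≥0∞) ≤ p := Fact.out
  have hp0 : p ≠ 0 := fun h => by simp [h] at hp1
  have hzero : (0 : Lp ℝ p μ) ∈ Gpk p μ k := by
    refine ⟨fun _ => 0, ⟨measurable_const, ⟨{0}, by simpa using hk, fun x => by simp⟩⟩,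
      Lp.coeFn_zero ℝ p μ⟩
  rcases eq_or_ne μ 0 with rfl | hμ0
  · have hnorm : ‖f - (0 : Lp ℝ p (0 : Measure Ω))‖ = 0 := by
      rw [sub_zero, Lp.norm_def, eLpNorm_measure_zero, ENNReal.toReal_zero]
    have h1 : Metric.infDist f (Gpk p (0 : Measure Ω) k) = 0 :=
      le_antisymm (by simpa [dist_eq_norm, hnorm] using Metric.infDist_le_dist_of_mem hzero)
        Metric.infDist_nonneg
    refine ⟨fun _ => 0, 0, fun _ => hzero, fun n => by simp, ?_⟩
    simpa [hnorm, h1] using tendsto_const_nhds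
  -- main case : μ ≠ 0
  have huniv0 : μ Set.univ ≠ 0 := fun h => hμ0 (Measure.measure_univ_eq_zero.mp h)
  have hunivtop : μ Set.univ ≠ ∞ := measure_ne_top μ _
  have hΩ : Nonempty Ω := by
    by_contra h
    rw [not_nonempty_iff] at h
    exact hμ0 (Measure.eq_zero_of_isEmpty μ)
  obtain ⟨f₀, hf₀m, hff₀⟩ : ∃ f₀ : Ω → ℝ, StronglyMeasurable f₀ ∧ (f : Ω → ℝ) =ᵐ[μ] f₀ :=
    ⟨(Lp.aestronglyMeasurable f).mk _, (Lp.aestronglyMeasurable f).stronglyMeasurable_mk,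
      (Lp.aestronglyMeasurable f).ae_eq_mk⟩
  have hf₀mem : MemLp f₀ p μ := (Lp.memLp f).ae_eq hff₀
  set V : List ℝ → Ω → ℝ := fun L x => near L (f₀ x) with hV
  have hVmeas : ∀ L, Measurable (V L) := fun L => (measurable_near L).comp hf₀m.measurable
  have hVmem : ∀ L, MemLp (V L) p μ := by
    intro L
    refine MemLp.of_bound (hVmeas L).aestronglyMeasurable ((L.map abs).sum)
      (Eventually.of_forall fun x => ?_)
    simpa [Real.norm_eq_abs] using near_abs_le L (f₀ x)
  set gE : List ℝ → Lp ℝ p μ := fun L => ((hVmem L).toLp (V L)) with hgE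
  have hgE_coe : ∀ L, (gE L : Ω → ℝ) =ᵐ[μ] V L := fun L => MemLp.coeFn_toLp _
  set J : List ℝ → ℝ := fun L => (eLpNorm (fun x => f₀ x - V L x) p μ).toReal with hJ
  have hEfin : ∀ L, eLpNorm (fun x => f₀ x - V L x) p μ ≠ ∞ := fun L =>
    ((hf₀mem.sub (hVmem L)).eLpNorm_lt_top).ne
  have hnormJ : ∀ L, ‖f - gE L‖ = J L := by
    intro L
    rw [Lp.norm_def]
    congr 1
    apply eLpNorm_congr_ae
    filter_upwards [Lp.coeFn_sub f (gE L), hff₀, hgE_coe L] with x h1 h2 h3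
    rw [h1, Pi.sub_apply, h2, h3]
  have hmemG : ∀ (L : List ℝ) (j : ℕ), L ≠ [] → L.length ≤ j → gE L ∈ Gpk p μ j := by
    intro L j hL hlen
    exact ⟨V L, ⟨hVmeas L, ⟨L.toFinset, le_trans L.toFinset_card_le hlen,
      fun x => List.mem_toFinset.mpr (near_mem L hL (f₀ x))⟩⟩, hgE_coe L⟩
  set S : ℕ → Set ℝ := fun j => J '' {L : List ℝ | L ≠ [] ∧ L.length ≤ j} with hS
  have hSne : ∀ j, 1 ≤ j → (S j).Nonempty := fun j hj =>
    ⟨J [0], ⟨[0], ⟨by simp, by simpa using hj⟩, rfl⟩⟩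
  have hSbdd : ∀ j, BddBelow (S j) := by
    intro j
    refine ⟨0, fun d hd => ?_⟩
    obtain ⟨L, _, rfl⟩ := hd
    exact ENNReal.toReal_nonneg
  set D : ℕ → ℝ := fun j => sInf (S j) with hD
  have hDle : ∀ (L : List ℝ) (j : ℕ), L ≠ [] → L.length ≤ j → D j ≤ J L := fun L j h1 h2 =>
    csInf_le (hSbdd j) ⟨L, ⟨h1, h2⟩, rfl⟩
  have hDnonneg : ∀ j, 1 ≤ j → 0 ≤ D j := fun j hj =>
    le_csInf (hSne j hj) (by rintro d ⟨L, _, rfl⟩; exact ENNReal.toReal_nonneg)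
  -- triangle inequality for eLpNorm of V L
  have hVnorm : ∀ L : List ℝ,
      eLpNorm (V L) p μ ≤ eLpNorm f₀ p μ + eLpNorm (fun x => f₀ x - V L x) p μ := by
    intro L
    calc eLpNorm (V L) p μ = eLpNorm (fun x => f₀ x + -(f₀ x - V L x)) p μ := by
          congr 1; funext x; ring
    _ ≤ eLpNorm f₀ p μ + eLpNorm (fun x => -(f₀ x - V L x)) p μ :=
        eLpNorm_add_le hf₀m.aestronglyMeasurable
          (((hf₀m.measurable.sub (hVmeas L)).neg).aestronglyMeasurable) hp1
    _ = eLpNorm f₀ p μ + eLpNorm (fun x => f₀ x - V L x) p μ := by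
        congr 1
        exact eLpNorm_neg (fun x => f₀ x - V L x) p μ ▸ rfl
  set E : ℝ := (eLpNorm f₀ p μ).toReal with hE
  have hf₀fin : eLpNorm f₀ p μ ≠ ∞ := hf₀mem.eLpNorm_lt_top.ne
  have hr : (0:ℝ) ≤ 1 / p.toReal := by positivity
  -- key bound: if `V L` equals `c` on a set `A`, then `|c| ⬝ μ(A)^{1/p} ≤ ‖f‖ + ‖f - V L‖`
  have key : ∀ (L : List ℝ) (c : ℝ) (A : Set Ω), MeasurableSet A → (∀ x ∈ A, V L x = c) →
      |c| * ((μ A) ^ (1 / p.toReal)).toReal ≤ E + J L := by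
    intro L c A hA hAc
    have h1 : eLpNorm (A.indicator fun _ => c) p μ ≤ eLpNorm (V L) p μ := by
      apply eLpNorm_mono
      intro x
      by_cases hx : x ∈ A
      · rw [Set.indicator_of_mem hx, ← hAc x hx]
      · rw [Set.indicator_of_notMem hx]; simp
    rw [eLpNorm_indicator_const hA hp0 hp] at h1
    have hfin2 : eLpNorm f₀ p μ + eLpNorm (fun x => f₀ x - V L x) p μ ≠ ∞ :=
      ENNReal.add_ne_top.mpr ⟨hf₀fin, hEfin L⟩
    have h3 : ((‖c‖₊ : ℝ≥0∞) * μ A ^ (1 / p.toReal)).toReal ≤ E + J L := by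
      rw [hE, hJ, ← ENNReal.toReal_add hf₀fin (hEfin L)]
      exact ENNReal.toReal_mono hfin2 (le_trans h1 (hVnorm L))
    calc |c| * ((μ A) ^ (1 / p.toReal)).toReal
        = ((‖c‖₊ : ℝ≥0∞) * μ A ^ (1 / p.toReal)).toReal := by
          rw [ENNReal.toReal_mul]; simp [Real.norm_eq_abs]
    _ ≤ E + J L := h3
  have hm : (0:ℝ) < ((μ Set.univ) ^ (1 / p.toReal)).toReal :=
    ENNReal.toReal_pos (ENNReal.rpow_pos (pos_iff_ne_zero.mpr huniv0) hunivtop).ne'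
      (ENNReal.rpow_ne_top_of_nonneg hr hunivtop)
  -- main induction : uniformly bounded near-minimizers exist
  have main : ∀ j, 1 ≤ j → ∃ C : ℝ, ∀ ε : ℝ, 0 < ε →
      ∃ L : List ℝ, L ≠ [] ∧ L.length ≤ j ∧ (∀ c ∈ L, |c| ≤ C) ∧ J L ≤ D j + ε := by
    intro j hj
    induction j, hj using Nat.le_induction with
    | base =>
      refine ⟨(E + (D 1 + 1)) / ((μ Set.univ) ^ (1 / p.toReal)).toReal, ?_⟩
      intro ε hε
      obtain ⟨d, ⟨L, ⟨hL1, hL2⟩, rfl⟩, hd⟩ :=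
        Real.lt_sInf_add_pos (hSne 1 le_rfl) (lt_min hε one_pos)
      obtain ⟨b, rfl⟩ := List.length_eq_one_iff.mp (le_antisymm hL2 (List.length_pos_iff.mpr hL1))
      refine ⟨[b], by simp, by simp, ?_, ?_⟩
      · intro c hc
        simp only [List.mem_singleton] at hc
        rw [hc]
        have hVb : ∀ x, V [b] x = b := fun x => by simp [hV, near]
        have h1 : |b| * ((μ Set.univ) ^ (1 / p.toReal)).toReal ≤ E + J [b] :=
          key [b] b Set.univ MeasurableSet.univ (fun x _ => hVb x)
        have h2 : J [b] ≤ D 1 + 1 :=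
          le_of_lt (lt_of_lt_of_le hd (add_le_add_right (min_le_right _ _) _))
        exact (le_div_iff₀ hm).mpr (le_trans h1 (by linarith))
      · exact le_of_lt (lt_of_lt_of_le hd (add_le_add_right (min_le_left _ _) _))
    | succ k' hk' IH =>
      have hmono : D (k'+1) ≤ D k' :=
        csInf_le_csInf (hSbdd (k'+1)) (hSne k' hk')
          (Set.image_mono (fun L hL => ⟨hL.1, le_trans hL.2 (Nat.le_succ k')⟩))
      rcases eq_or_lt_of_le hmono with heq | hlt
      · obtain ⟨C, hC⟩ := IH
        refine ⟨C, fun ε hε => ?_⟩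
        obtain ⟨L, h1, h2, h3, h4⟩ := hC ε hε
        exact ⟨L, h1, h2.trans (Nat.le_succ _), h3, by rw [heq]; exact h4⟩
      · set ε₀ := D k' - D (k'+1) with hε₀def
        have hε₀ : 0 < ε₀ := sub_pos.mpr hlt
        have hKne0 : ((k'+1:ℕ) : ℝ≥0∞) ≠ 0 := by
          simp
        have hKnetop : ((k'+1:ℕ) : ℝ≥0∞) ≠ ∞ := ENNReal.natCast_ne_top _
        have hdiv0 : μ Set.univ / ((k'+1:ℕ) : ℝ≥0∞) ≠ 0 := by
          simp [ENNReal.div_eq_zero_iff, huniv0, hKnetop]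
        have hdivtop : μ Set.univ / ((k'+1:ℕ) : ℝ≥0∞) ≠ ∞ :=
          (ENNReal.div_lt_top hunivtop hKne0).ne
        set m₁ : ℝ := ((μ Set.univ / ((k'+1:ℕ) : ℝ≥0∞)) ^ (1 / p.toReal)).toReal with hm₁
        have hm₁pos : 0 < m₁ :=
          ENNReal.toReal_pos (ENNReal.rpow_pos (pos_iff_ne_zero.mpr hdiv0) hdivtop).ne'
            (ENNReal.rpow_ne_top_of_nonneg hr hdivtop)
        set R : ℝ := E + (D (k'+1) + ε₀) with hR
        have hRpos : 0 ≤ R := by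
          have := hDnonneg (k'+1) (by omega)
          have hE0 : 0 ≤ E := ENNReal.toReal_nonneg
          rw [hR]; linarith
        set M₁ : ℝ := R / m₁ with hM₁
        have hM₁pos : 0 ≤ M₁ := div_nonneg hRpos hm₁pos.le
        obtain ⟨M, hMpos, hM⟩ :=
          hf₀mem.eLpNorm_indicator_norm_ge_pos_le hf₀m (show (0:ℝ) < ε₀/8 by linarith)
        set T := max M M₁ with hT
        have hM₁T : M₁ ≤ T := le_max_right _ _
        have hTnonneg : 0 ≤ T := le_trans hMpos.le (le_max_left _ _)
        set B := {x | T ≤ |f₀ x|} with hB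
        have hBmeas : MeasurableSet B := measurableSet_le measurable_const hf₀m.measurable.abs
        -- tail bound
        have htail : eLpNorm (B.indicator fun y => 3 * |f₀ y|) p μ ≤ 3 * ENNReal.ofReal (ε₀/8) := by
          have e1 : (B.indicator fun y => 3 * |f₀ y|) = (3:ℝ) • fun y => |B.indicator f₀ y| := by
            funext x
            by_cases hx : x ∈ B <;> simp [Set.indicator, hx]
          rw [e1, eLpNorm_const_smul]
          have e2 : eLpNorm (fun y => |B.indicator f₀ y|) p μ = eLpNorm (B.indicator f₀) p μ := by
            simpa [Real.norm_eq_abs] using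
              eLpNorm_norm (F := ℝ) (f := B.indicator f₀) (p := p) (μ := μ)
          have e3 : eLpNorm (B.indicator f₀) p μ ≤ eLpNorm ({x | M ≤ ‖f₀ x‖₊}.indicator f₀) p μ := by
            apply eLpNorm_mono
            intro x
            by_cases hx : x ∈ B
            · have hx2 : x ∈ {x | M ≤ ‖f₀ x‖₊} := by
                simp only [Set.mem_setOf_eq] at hx ⊢
                rw [coe_nnnorm, Real.norm_eq_abs]
                exact le_trans (le_max_left M M₁) hx
              rw [Set.indicator_of_mem hx, Set.indicator_of_mem hx2]
            · rw [Set.indicator_of_notMem hx]; simp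
          rw [e2]
          have h33 : ‖(3:ℝ)‖ₑ = 3 := by rw [Real.enorm_eq_ofReal_abs]; norm_num
          rw [h33]
          exact mul_le_mul_right (le_trans e3 hM) 3
        -- pigeonhole: every near-minimizer has some value of small modulus
        have pigeon : ∀ L : List ℝ, L ≠ [] → L.length ≤ k'+1 → J L ≤ D (k'+1) + ε₀ →
            ∃ b ∈ L, |b| ≤ M₁ := by
          intro L hL hlen hJL
          set A : ℝ → Set Ω := fun v => (V L) ⁻¹' {v} with hA
          have hAmeas : ∀ v, MeasurableSet (A v) := fun v => (hVmeas L) (measurableSet_singleton v)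
          have hsne : L.toFinset.Nonempty := by
            rcases List.exists_mem_of_ne_nil L hL with ⟨a, ha⟩
            exact ⟨a, List.mem_toFinset.mpr ha⟩
          obtain ⟨v, hvs, hvmax⟩ := L.toFinset.exists_max_image (fun v => μ (A v)) hsne
          have hcover : (⋃ v ∈ L.toFinset, A v) = Set.univ :=
            Set.eq_univ_of_forall fun x =>
              Set.mem_biUnion (List.mem_toFinset.mpr (near_mem L hL (f₀ x))) rfl
          have hdisj : (L.toFinset : Set ℝ).PairwiseDisjoint A := by
            intro v1 _ w _ hvw
            apply Set.disjoint_left.mpr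
            intro x hxv hxw
            exact hvw (by rw [← hxv, ← hxw])
          have hsum : ∑ w ∈ L.toFinset, μ (A w) = μ Set.univ := by
            rw [← measure_biUnion_finset hdisj (fun w _ => hAmeas w), hcover]
          have hcard : ((L.toFinset.card : ℕ) : ℝ≥0∞) ≤ ((k'+1 : ℕ) : ℝ≥0∞) :=
            Nat.cast_le.mpr (le_trans L.toFinset_card_le hlen)
          have hbig : μ Set.univ / ((k'+1:ℕ) : ℝ≥0∞) ≤ μ (A v) := by
            rw [ENNReal.div_le_iff_le_mul (Or.inl hKne0) (Or.inl hKnetop)]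
            calc μ Set.univ = ∑ w ∈ L.toFinset, μ (A w) := hsum.symm
            _ ≤ L.toFinset.card • μ (A v) :=
                Finset.sum_le_card_nsmul _ _ _ (fun w hw => hvmax w hw)
            _ = ((L.toFinset.card : ℕ) : ℝ≥0∞) * μ (A v) := by rw [nsmul_eq_mul]
            _ ≤ ((k'+1:ℕ) : ℝ≥0∞) * μ (A v) := mul_le_mul_left hcard _
            _ = μ (A v) * ((k'+1:ℕ) : ℝ≥0∞) := mul_comm _ _
          refine ⟨v, List.mem_toFinset.mp hvs, ?_⟩
          have h1 : |v| * ((μ (A v)) ^ (1/p.toReal)).toReal ≤ E + J L :=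
            key L v (A v) (hAmeas v) (fun x hx => hx)
          have h2 : m₁ ≤ ((μ (A v)) ^ (1/p.toReal)).toReal := by
            apply ENNReal.toReal_mono
            · exact ENNReal.rpow_ne_top_of_nonneg hr (measure_ne_top μ _)
            · exact ENNReal.rpow_le_rpow hbig hr
          have h3 : |v| * m₁ ≤ R := by
            calc |v| * m₁ ≤ |v| * ((μ (A v)) ^ (1/p.toReal)).toReal :=
                  mul_le_mul_of_nonneg_left h2 (abs_nonneg v)
            _ ≤ E + J L := h1
            _ ≤ R := by rw [hR]; linarith
          rw [hM₁]
          exact (le_div_iff₀ hm₁pos).mpr h3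
        -- conclusion of the inductive step
        refine ⟨2 * T + M₁, fun ε hε => ?_⟩
        have hε' : 0 < min ε (ε₀/8) := lt_min hε (by linarith)
        obtain ⟨d, ⟨L, ⟨hL1, hL2⟩, rfl⟩, hd⟩ := Real.lt_sInf_add_pos (hSne (k'+1) (by omega)) hε'
        refine ⟨L, hL1, hL2, ?_,
          le_of_lt (lt_of_lt_of_le hd (add_le_add_right (min_le_left _ _) _))⟩
        intro a ha
        by_contra hcon
        push_neg at hcon
        have hJL : J L ≤ D (k'+1) + ε₀ := by
          have : min ε (ε₀/8) ≤ ε₀ := le_trans (min_le_right _ _) (by linarith)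
          exact le_of_lt (lt_of_lt_of_le hd (add_le_add_right this _))
        obtain ⟨b₀, hb₀L, hb₀⟩ := pigeon L hL1 hL2 hJL
        have hb₀a : b₀ ≠ a := by
          intro h; rw [h] at hb₀
          linarith
        set L' := L.filter (fun c => !decide (c = a)) with hL'
        have hb₀L' : b₀ ∈ L' := List.mem_filter.mpr ⟨hb₀L, by simp [hb₀a]⟩
        have hL'ne : L' ≠ [] := List.ne_nil_of_mem hb₀L'
        have hL'len : L'.length ≤ k' := by
          have hsplit := List.length_eq_length_filter_add (l := L) (fun c => decide (c = a))
          have haf : a ∈ L.filter (fun c => decide (c = a)) := List.mem_filter.mpr ⟨ha, by simp⟩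
          have h1 : 1 ≤ (L.filter (fun c => decide (c = a))).length :=
            List.length_pos_iff.mpr (List.ne_nil_of_mem haf)
          have h2 : L'.length = (L.filter (fun c => !decide (c = a))).length := by rw [hL']
          omega
        -- pointwise estimate
        have hptwise : ∀ x, |f₀ x - V L' x| ≤ |f₀ x - V L x| + B.indicator (fun y => 3 * |f₀ y|) x := by
          intro x
          by_cases hxa : near L (f₀ x) = a
          · have h1 : |f₀ x - a| ≤ |f₀ x - b₀| := by
              have := near_le L (f₀ x) b₀ hb₀L
              rwa [hxa] at this
            have e1 : |a| - |f₀ x| ≤ |f₀ x - a| := by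
              have h := abs_sub_abs_le_abs_sub a (f₀ x)
              rw [abs_sub_comm] at h
              linarith
            have e2 : |f₀ x - b₀| ≤ |f₀ x| + |b₀| := by
              have h := abs_add_le (f₀ x) (-b₀)
              simpa [sub_eq_add_neg] using h
            have hxT : T ≤ |f₀ x| := by linarith
            have hxB : x ∈ B := by rw [hB]; exact hxT
            have h4 := near_le L' (f₀ x) b₀ hb₀L'
            rw [Set.indicator_of_mem hxB]
            have h5 : 0 ≤ |f₀ x - V L x| := abs_nonneg _
            have h6 : |f₀ x - V L' x| ≤ |f₀ x| + |b₀| := le_trans h4 e2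
            linarith
          · have hmem' : V L x ∈ L' :=
              List.mem_filter.mpr ⟨near_mem L hL1 (f₀ x), by simpa using hxa⟩
            have h4 := near_le L' (f₀ x) (V L x) hmem'
            have h5 : 0 ≤ B.indicator (fun y => 3 * |f₀ y|) x :=
              Set.indicator_nonneg (fun y _ => by positivity) x
            linarith
        -- eLpNorm chain
        have hchain : eLpNorm (fun x => f₀ x - V L' x) p μ ≤
            eLpNorm (fun x => f₀ x - V L x) p μ + 3 * ENNReal.ofReal (ε₀/8) := by
          calc eLpNorm (fun x => f₀ x - V L' x) p μ
              ≤ eLpNorm (fun x => |f₀ x - V L x| + B.indicator (fun y => 3 * |f₀ y|) x) p μ := by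
                apply eLpNorm_mono
                intro x
                rw [Real.norm_eq_abs, Real.norm_eq_abs]
                exact le_trans (hptwise x) (le_abs_self _)
          _ ≤ eLpNorm (fun x => |f₀ x - V L x|) p μ +
                eLpNorm (B.indicator (fun y => 3 * |f₀ y|)) p μ :=
                eLpNorm_add_le ((hf₀m.measurable.sub (hVmeas L)).abs.aestronglyMeasurable)
                  (((measurable_const.mul hf₀m.measurable.abs).indicator hBmeas).aestronglyMeasurable)
                  hp1
          _ ≤ eLpNorm (fun x => f₀ x - V L x) p μ + 3 * ENNReal.ofReal (ε₀/8) := by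
                have e4 : eLpNorm (fun x => |f₀ x - V L x|) p μ =
                    eLpNorm (fun x => f₀ x - V L x) p μ := by
                  simpa [Real.norm_eq_abs] using
                    eLpNorm_norm (F := ℝ) (f := fun x => f₀ x - V L x) (p := p) (μ := μ)
                rw [e4]
                exact add_le_add_right htail _
        have hJ' : J L' ≤ J L + 3 * (ε₀/8) := by
          rw [hJ]
          calc (eLpNorm (fun x => f₀ x - V L' x) p μ).toReal
              ≤ ((eLpNorm (fun x => f₀ x - V L x) p μ) + 3 * ENNReal.ofReal (ε₀/8)).toReal := by
                apply ENNReal.toReal_mono _ hchain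
                exact ENNReal.add_ne_top.mpr ⟨hEfin L, by finiteness⟩
          _ = J L + 3 * (ε₀/8) := by
                rw [ENNReal.toReal_add (hEfin L) (by finiteness), ENNReal.toReal_mul,
                  ENNReal.toReal_ofReal (by linarith)]
                simp [hJ]
        have hcontr : D k' ≤ J L' := hDle L' k' hL'ne hL'len
        have hlt2 : J L < D (k'+1) + ε₀/8 :=
          lt_of_lt_of_le hd (add_le_add_right (min_le_right _ _) _)
        rw [hε₀def] at hJ' hlt2
        linarith
  -- identification of the infimum
  obtain ⟨C, hC⟩ := main k hk
  have hDinf : Metric.infDist f (Gpk p μ k) = D k := by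
    apply le_antisymm
    · apply le_csInf (hSne k hk)
      rintro d ⟨L, ⟨hL1, hL2⟩, rfl⟩
      calc Metric.infDist f (Gpk p μ k) ≤ dist f (gE L) :=
            Metric.infDist_le_dist_of_mem (hmemG L k hL1 hL2)
      _ = J L := by rw [dist_eq_norm, hnormJ]
    · apply le_of_not_gt
      intro hlt2
      obtain ⟨h, hhG, hdist⟩ := (Metric.infDist_lt_iff ⟨0, hzero⟩).mp hlt2
      obtain ⟨g0, ⟨hg0meas, s, hcard, hmem⟩, hae⟩ := hhG
      have hsne2 : s.Nonempty := ⟨g0 (Classical.arbitrary Ω), hmem _⟩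
      set L := s.toList with hLdef
      have hL1 : L ≠ [] := hsne2.toList_ne_nil
      have hL2 : L.length ≤ k := by rw [hLdef, Finset.length_toList]; exact hcard
      have hJle : J L ≤ dist f h := by
        rw [dist_eq_norm, Lp.norm_def, hJ]
        apply ENNReal.toReal_mono (Lp.memLp (f - h)).eLpNorm_lt_top.ne
        apply eLpNorm_mono_ae
        filter_upwards [Lp.coeFn_sub f h, hff₀, hae] with x h1 h2 h3
        rw [h1, Pi.sub_apply, h2, h3, Real.norm_eq_abs, Real.norm_eq_abs]
        exact near_le L (f₀ x) (g0 x) (Finset.mem_toList.mpr (hmem x))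
      have := hDle L k hL1 hL2
      linarith
  -- the minimizing sequence
  have hex : ∀ n : ℕ, ∃ L : List ℝ, L ≠ [] ∧ L.length ≤ k ∧ (∀ c ∈ L, |c| ≤ C) ∧
      J L ≤ D k + 1/((n:ℝ)+1) := fun n => hC (1/((n:ℝ)+1)) (by positivity)
  choose Ls h1 h2 h3 h4 using hex
  refine ⟨fun n => gE (Ls n), C, fun n => hmemG _ k (h1 n) (h2 n), fun n => ?_, ?_⟩
  · filter_upwards [hgE_coe (Ls n)] with x hx
    rw [hx]
    exact h3 n _ (near_mem _ (h1 n) (f₀ x))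
  · rw [hDinf]
    have hub : ∀ n:ℕ, ‖f - gE (Ls n)‖ ≤ D k + 1/((n:ℝ)+1) := fun n => by
      rw [hnormJ]; exact h4 n
    have hlb : ∀ n:ℕ, D k ≤ ‖f - gE (Ls n)‖ := fun n => by
      rw [hnormJ]; exact hDle _ k (h1 n) (h2 n)
    have hupper : Tendsto (fun n : ℕ => D k + 1/((n:ℝ)+1)) atTop (𝓝 (D k)) := by
      have h0 := tendsto_one_div_add_atTop_nhds_zero_nat (𝕜 := ℝ)
      simpa using tendsto_const_nhds.add h0
    exact tendsto_of_tendsto_of_tendsto_of_le_of_le tendsto_const_nhds hupper hlb hub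
end

section
/- Let (Ω,𝓕,μ) be a finite measure space, p > 1, A a measurable set with 0 < μ(A) < ∞, and f ∈ L^p. Then the function a ↦ ∫_A |f−a|^p dμ has a unique minimizer m ∈ ℝ, which is characterized by ∫_{A ∩ {f ≤ m}} (m−f)^{p−1} dμ = ∫_{A ∩ {f > m}} (f−m)^{p−1} dμ. -/
open MeasureTheory ENNReal Filter Topology

variable {Ω : Type*} [MeasurableSpace Ω]

noncomputable def psgn (q y : ℝ) : ℝ := if 0 ≤ y then y ^ q else -((-y) ^ q)

lemma psgn_of_nonneg {q y : ℝ} (h : 0 ≤ y) : psgn q y = y ^ q := if_pos h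

lemma psgn_of_neg {q y : ℝ} (h : y < 0) : psgn q y = -((-y) ^ q) := if_neg (not_le.2 h)

lemma psgn_zero {q : ℝ} (hq : q ≠ 0) : psgn q 0 = 0 := by
  simp [psgn, Real.zero_rpow hq]

lemma psgn_neg {q : ℝ} (hq : q ≠ 0) (y : ℝ) : psgn q (-y) = -psgn q y := by
  rcases lt_trichotomy y 0 with h | rfl | h
  · rw [psgn_of_neg h, psgn_of_nonneg (by linarith), neg_neg]
  · simp [psgn_zero hq]
  · rw [psgn_of_nonneg h.le, psgn_of_neg (by linarith), neg_neg]

lemma abs_psgn (q y : ℝ) : |psgn q y| = |y| ^ q := by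
  rcases le_or_gt 0 y with h | h
  · rw [psgn_of_nonneg h, abs_of_nonneg (Real.rpow_nonneg h q), abs_of_nonneg h]
  · rw [psgn_of_neg h, abs_neg, abs_of_nonneg (Real.rpow_nonneg (by linarith) q),
      abs_of_neg h]

lemma psgn_strictMono {q : ℝ} (hq : 0 < q) : StrictMono (psgn q) := by
  intro a b hab
  rcases le_or_gt 0 a with ha | ha
  · rw [psgn_of_nonneg ha, psgn_of_nonneg (le_trans ha hab.le)]
    exact Real.rpow_lt_rpow ha hab hq
  · rcases le_or_gt 0 b with hb | hb
    · rw [psgn_of_neg ha, psgn_of_nonneg hb]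
      exact lt_of_lt_of_le (neg_neg_iff_pos.2 (Real.rpow_pos_of_pos (by linarith) q))
        (Real.rpow_nonneg hb q)
    · rw [psgn_of_neg ha, psgn_of_neg hb, neg_lt_neg_iff]
      exact Real.rpow_lt_rpow (by linarith) (by linarith) hq

lemma psgn_nonneg {q y : ℝ} (h : 0 ≤ y) : 0 ≤ psgn q y := by
  rw [psgn_of_nonneg h]; exact Real.rpow_nonneg h q

lemma measurable_psgn (q : ℝ) : Measurable (psgn q) := by
  unfold psgn
  exact Measurable.ite (measurableSet_le measurable_const measurable_id) (measurable_id.pow_const q)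
    ((measurable_id.neg.pow_const q).neg)

lemma abs_rpow_mul_self {q : ℝ} (hq : q ≠ 0) (y : ℝ) : |y| ^ (q - 1) * y = psgn q y := by
  rcases lt_trichotomy y 0 with h | rfl | h
  · rw [psgn_of_neg h, abs_of_neg h]
    have : (-y) ^ (q - 1) * -y = (-y) ^ q := by
      rw [← Real.rpow_add_one (by linarith : -y ≠ 0) (q-1), sub_add_cancel]
    nlinarith [this]
  · simp [psgn_zero hq]
  · rw [psgn_of_nonneg h.le, abs_of_pos h,
      ← Real.rpow_add_one (by linarith : y ≠ 0) (q-1), sub_add_cancel]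

lemma myDeriv {p : ℝ} (hp : 1 < p) (c a : ℝ) :
    HasDerivAt (fun a : ℝ => |c - a| ^ p) (p * psgn (p - 1) (a - c)) a := by
  have h1 := hasDerivAt_abs_rpow (c - a) hp
  have h2 : HasDerivAt (fun a : ℝ => c - a) (-1) a := (hasDerivAt_id a).const_sub c |>.congr_deriv (by ring)
  have h3 : HasDerivAt (fun a : ℝ => |c - a| ^ p) (p * |c - a| ^ (p - 2) * (c - a) * -1) a :=
    h1.comp a h2
  convert h3 using 1
  rw [← abs_rpow_mul_self (by linarith : p - 1 ≠ 0) (a - c)]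
  have : |a - c| = |c - a| := abs_sub_comm a c
  rw [this]
  have : (p - 1) - 1 = p - 2 := by ring
  rw [this]
  ring

section Aux
variable {Ω : Type*} [MeasurableSpace Ω] {ν : MeasureTheory.Measure Ω} [IsFiniteMeasure ν]
  {p : ℝ} {g : Ω → ℝ}

lemma integ_rpow (hp : 1 < p) (hg : Measurable g) (hgp : MemLp g (ENNReal.ofReal p) ν)
    {q : ℝ} (hq1 : 0 < q) (hq2 : q ≤ p) (a : ℝ) :
    Integrable (fun x => |g x - a| ^ q) ν := by
  have h1 : MemLp (fun x => g x - a) (ENNReal.ofReal p) ν := hgp.sub (memLp_const a)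
  have h2 : MemLp (fun x => g x - a) (ENNReal.ofReal q) ν :=
    h1.mono_exponent (ENNReal.ofReal_le_ofReal hq2)
  have h3 := h2.integrable_norm_rpow (by simp [hq1]) (by simp)
  simpa [ENNReal.toReal_ofReal hq1.le, Real.norm_eq_abs] using h3

lemma integ_abs_add (hp : 1 < p) (hg : Measurable g) (hgp : MemLp g (ENNReal.ofReal p) ν)
    {q : ℝ} (hq1 : 0 < q) (hq2 : q ≤ p) {C : ℝ} (hC : 0 ≤ C) :
    Integrable (fun x => (|g x| + C) ^ q) ν := by
  have h1 : MemLp (fun x => |g x| + C) (ENNReal.ofReal p) ν := by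
    exact hgp.norm.add (memLp_const C)
  have h2 : MemLp (fun x => |g x| + C) (ENNReal.ofReal q) ν :=
    h1.mono_exponent (ENNReal.ofReal_le_ofReal hq2)
  have h3 := h2.integrable_norm_rpow (by simp [hq1]) (by simp)
  have : ∀ x, ‖|g x| + C‖ ^ ((ENNReal.ofReal q).toReal) = (|g x| + C) ^ q := by
    intro x
    rw [ENNReal.toReal_ofReal hq1.le, Real.norm_eq_abs,
      abs_of_nonneg (by positivity)]
  exact h3.congr (Filter.Eventually.of_forall fun x => (this x))

lemma integ_s (hp : 1 < p) (hg : Measurable g) (hgp : MemLp g (ENNReal.ofReal p) ν) (a : ℝ) :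
    Integrable (fun x => psgn (p - 1) (a - g x)) ν := by
  have hq : (0:ℝ) < p - 1 := by linarith
  have hmeas : Measurable (fun x => psgn (p - 1) (a - g x)) :=
    (measurable_psgn _).comp (measurable_const.sub hg)
  refine (integ_rpow hp hg hgp hq (by linarith) a).mono' hmeas.aestronglyMeasurable ?_
  refine Filter.Eventually.of_forall fun x => ?_
  rw [Real.norm_eq_abs, abs_psgn, abs_sub_comm]

lemma hasDerivPhi (hp : 1 < p) (hg : Measurable g) (hgp : MemLp g (ENNReal.ofReal p) ν)
    (a₀ : ℝ) :
    HasDerivAt (fun a => ∫ x, |g x - a| ^ p ∂ν)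
      (p * ∫ x, psgn (p - 1) (a₀ - g x) ∂ν) a₀ := by
  have hq : (0:ℝ) < p - 1 := by linarith
  have key := hasDerivAt_integral_of_dominated_loc_of_deriv_le
    (F := fun (a : ℝ) (x : Ω) => |g x - a| ^ p)
    (F' := fun (a : ℝ) (x : Ω) => p * psgn (p - 1) (a - g x))
    (μ := ν) (x₀ := a₀) (bound := fun x => p * ((|g x| + (|a₀| + 1)) ^ (p - 1)))
    (Metric.ball_mem_nhds a₀ one_pos) ?_ ?_ ?_ ?_ ?_ ?_
  · rcases key with ⟨-, hder⟩
    refine hder.congr_deriv ?_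
    rw [integral_const_mul]
  · exact Filter.Eventually.of_forall fun a =>
      ((hg.sub measurable_const).abs.pow_const p).aestronglyMeasurable
  · exact integ_rpow hp hg hgp (by linarith) le_rfl a₀
  · exact (((measurable_psgn _).comp (measurable_const.sub hg)).const_mul p).aestronglyMeasurable
  · refine Filter.Eventually.of_forall fun x a ha => ?_
    rw [Real.norm_eq_abs, abs_mul, abs_of_pos (by linarith : (0:ℝ) < p), abs_psgn]
    have hball : |a - a₀| < 1 := by simpa [Real.dist_eq] using Metric.mem_ball.mp ha
    have h1 : |a - g x| ≤ |g x| + (|a₀| + 1) := by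
      have h2 : |a - g x| ≤ |a| + |g x| := by
        rw [sub_eq_add_neg]; exact (abs_add_le a (-g x)).trans (by rw [abs_neg])
      have h3 : |a| ≤ |a₀| + 1 := by
        have := abs_sub_abs_le_abs_sub a a₀; linarith
      linarith
    exact mul_le_mul_of_nonneg_left
      (Real.rpow_le_rpow (abs_nonneg _) h1 (by linarith)) (by linarith)
  · exact (integ_abs_add hp hg hgp hq (by linarith) (by positivity)).const_mul p
  · exact Filter.Eventually.of_forall fun x a _ => myDeriv hp (g x) a

lemma strictMono_psi (hp : 1 < p) (hg : Measurable g) (hgp : MemLp g (ENNReal.ofReal p) ν)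
    (h0 : ν ≠ 0) :
    StrictMono (fun a => ∫ x, psgn (p - 1) (a - g x) ∂ν) := by
  intro a b hab
  have hq : (0:ℝ) < p - 1 := by linarith
  have hia := integ_s hp hg hgp a
  have hib := integ_s hp hg hgp b
  have hlt : ∀ x, psgn (p-1) (a - g x) < psgn (p-1) (b - g x) :=
    fun x => psgn_strictMono hq (by linarith)
  have hpos : 0 < ∫ x, (psgn (p-1) (b - g x) - psgn (p-1) (a - g x)) ∂ν := by
    rw [integral_pos_iff_support_of_nonneg_ae
      (Filter.Eventually.of_forall fun x => sub_nonneg.2 (hlt x).le) (hib.sub hia)]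
    have hsupp : (Function.support fun x => psgn (p-1) (b - g x) - psgn (p-1) (a - g x))
        = Set.univ := by
      ext x; simp [Function.mem_support, sub_ne_zero, (hlt x).ne']
    rw [hsupp]
    exact Measure.measure_univ_pos.mpr h0
  rw [integral_sub hib hia] at hpos
  linarith

lemma exists_psi_pos (hp : 1 < p) (hg : Measurable g) (hgp : MemLp g (ENNReal.ofReal p) ν)
    (h0 : ν ≠ 0) :
    ∃ b : ℝ, 0 < ∫ x, psgn (p - 1) (b - g x) ∂ν := by
  have hq : (0:ℝ) < p - 1 := by linarith
  have hC : Integrable (fun x => |g x| ^ (p-1)) ν := by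
    simpa using integ_rpow hp hg hgp hq (by linarith) 0
  set C := ∫ x, |g x| ^ (p-1) ∂ν with hCdef
  have hCnn : 0 ≤ C := integral_nonneg fun x => Real.rpow_nonneg (abs_nonneg _) _
  set u : ℕ → Ω → ℝ := fun n x => psgn (p-1) ((n:ℝ) - g x) + |g x| ^ (p-1) with hu
  have hunn : ∀ n x, 0 ≤ u n x := by
    intro n x
    rcases le_or_gt (g x) (n:ℝ) with h | h
    · have h1 := psgn_nonneg (q := p-1) (sub_nonneg.2 h)
      have h2 := Real.rpow_nonneg (abs_nonneg (g x)) (p-1)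
      simp only [hu]; linarith
    · have h1 : psgn (p-1) ((n:ℝ) - g x) = -((g x - n) ^ (p-1)) := by
        rw [psgn_of_neg (by linarith)]; congr 2; ring
      have h2 : (g x - n) ^ (p-1) ≤ |g x| ^ (p-1) := by
        apply Real.rpow_le_rpow (by linarith) _ hq.le
        have h3 : (0:ℝ) ≤ (n:ℝ) := Nat.cast_nonneg n
        have h4 := le_abs_self (g x); linarith
      simp only [hu]; rw [h1]; linarith
  have humono : ∀ x, Monotone fun n : ℕ => u n x := by
    intro x m n hmn
    simp only [hu]
    have := (psgn_strictMono hq).monotone (a := (m:ℝ) - g x) (b := (n:ℝ) - g x)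
      (by have : (m:ℝ) ≤ n := Nat.cast_le.2 hmn; linarith)
    linarith
  have hutend : ∀ x, Tendsto (fun n : ℕ => u n x) atTop atTop := by
    intro x
    apply Filter.tendsto_atTop_add_const_right
    have h1 : Tendsto (fun n : ℕ => (n:ℝ) - g x) atTop atTop :=
      tendsto_atTop_add_const_right _ _ tendsto_natCast_atTop_atTop
    have h3 := (tendsto_rpow_atTop hq).comp h1
    apply h3.congr'
    filter_upwards [h1.eventually_ge_atTop 0] with n hn
    simp only [Function.comp_apply]
    rw [psgn_of_nonneg hn]
  have hInt : ∀ n : ℕ, Integrable (u n) ν :=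
    fun n => (integ_s hp hg hgp _).add hC
  have hlim : Tendsto (fun n : ℕ => ∫⁻ x, ENNReal.ofReal (u n x) ∂ν) atTop
      (𝓝 (∫⁻ _x, (⊤:ℝ≥0∞) ∂ν)) := by
    apply lintegral_tendsto_of_tendsto_of_monotone
    · intro n
      exact (ENNReal.measurable_ofReal.comp
        (((measurable_psgn _).comp (measurable_const.sub hg)).add
          (hg.abs.pow_const _))).aemeasurable
    · exact Filter.Eventually.of_forall fun x m n hmn =>
        ENNReal.ofReal_le_ofReal (humono x hmn)
    · exact Filter.Eventually.of_forall fun x =>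
        ENNReal.tendsto_ofReal_atTop.comp (hutend x)
  have htop : (∫⁻ _x, (⊤:ℝ≥0∞) ∂ν) = ⊤ := by
    rw [lintegral_const]
    exact ENNReal.top_mul (by simpa [Measure.measure_univ_ne_zero] using h0)
  rw [htop] at hlim
  have hev : ∀ᶠ n : ℕ in atTop, ENNReal.ofReal C < ∫⁻ x, ENNReal.ofReal (u n x) ∂ν :=
    hlim.eventually (eventually_gt_nhds ENNReal.ofReal_lt_top)
  obtain ⟨n, hn⟩ := hev.exists
  refine ⟨n, ?_⟩
  have heq : ∫⁻ x, ENNReal.ofReal (u n x) ∂ν = ENNReal.ofReal (∫ x, u n x ∂ν) :=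
    (ofReal_integral_eq_lintegral_ofReal (hInt n)
      (Filter.Eventually.of_forall (hunn n))).symm
  rw [heq] at hn
  have hsum : ∫ x, u n x ∂ν = (∫ x, psgn (p-1) ((n:ℝ) - g x) ∂ν) + C :=
    integral_add (integ_s hp hg hgp _) hC
  rw [hsum] at hn
  have := (ENNReal.ofReal_lt_ofReal_iff_of_nonneg hCnn).1 hn
  linarith

lemma exists_psi_neg (hp : 1 < p) (hg : Measurable g) (hgp : MemLp g (ENNReal.ofReal p) ν)
    (h0 : ν ≠ 0) :
    ∃ a : ℝ, ∫ x, psgn (p - 1) (a - g x) ∂ν < 0 := by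
  obtain ⟨b, hb⟩ := exists_psi_pos hp hg.neg hgp.neg h0
  refine ⟨-b, ?_⟩
  have hpt : ∀ x, psgn (p-1) (-b - g x) = -psgn (p-1) (b - (-g x)) := by
    intro x
    rw [← psgn_neg (by linarith : p - 1 ≠ 0)]
    congr 1; ring
  rw [integral_congr_ae (Filter.Eventually.of_forall hpt), integral_neg]
  simpa using hb

lemma min_iff_psi_zero (hp : 1 < p) (hg : Measurable g) (hgp : MemLp g (ENNReal.ofReal p) ν)
    (h0 : ν ≠ 0) (m : ℝ) :
    (∀ a : ℝ, ∫ x, |g x - m| ^ p ∂ν ≤ ∫ x, |g x - a| ^ p ∂ν) ↔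
      ∫ x, psgn (p - 1) (m - g x) ∂ν = 0 := by
  have hD := hasDerivPhi hp hg hgp
  have hmono : StrictMono (fun a => ∫ x, psgn (p-1) (a - g x) ∂ν) :=
    strictMono_psi hp hg hgp h0
  constructor
  · intro hmin
    have hloc : IsLocalMin (fun a => ∫ x, |g x - a| ^ p ∂ν) m :=
      Filter.Eventually.of_forall hmin
    have hz := hloc.hasDerivAt_eq_zero (hD m)
    have hpne : p ≠ 0 := by linarith
    rcases mul_eq_zero.1 hz with h | h
    · exact absurd h hpne
    · exact h
  · intro hzero a
    rcases lt_trichotomy a m with h | rfl | h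
    · have hanti : StrictAntiOn (fun a => ∫ x, |g x - a| ^ p ∂ν) (Set.Iic m) := by
        apply strictAntiOn_of_deriv_neg (convex_Iic m)
        · exact fun x _ => (hD x).continuousAt.continuousWithinAt
        · intro y hy
          rw [interior_Iic] at hy
          rw [(hD y).deriv]
          have hlt : (∫ x, psgn (p-1) (y - g x) ∂ν) < 0 := by
            have := hmono (a := y) (b := m) hy
            simpa [hzero] using this
          exact mul_neg_of_pos_of_neg (by linarith) hlt
      exact (hanti (Set.mem_Iic.2 h.le) (Set.mem_Iic.2 le_rfl) h).le
    · exact le_rfl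
    · have hmono' : StrictMonoOn (fun a => ∫ x, |g x - a| ^ p ∂ν) (Set.Ici m) := by
        apply strictMonoOn_of_deriv_pos (convex_Ici m)
        · exact fun x _ => (hD x).continuousAt.continuousWithinAt
        · intro y hy
          rw [interior_Ici] at hy
          rw [(hD y).deriv]
          have hlt : 0 < (∫ x, psgn (p-1) (y - g x) ∂ν) := by
            have := hmono (a := m) (b := y) hy
            simpa [hzero] using this
          exact mul_pos (by linarith) hlt
      exact (hmono' (Set.mem_Ici.2 le_rfl) (Set.mem_Ici.2 h.le) h).le

lemma psi_split (hp : 1 < p) (hg : Measurable g) (hgp : MemLp g (ENNReal.ofReal p) ν)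
    (m : ℝ) :
    ∫ x, psgn (p-1) (m - g x) ∂ν
      = (∫ x in {x | g x ≤ m}, (m - g x) ^ (p-1) ∂ν)
        - ∫ x in {x | m < g x}, (g x - m) ^ (p-1) ∂ν := by
  have hs : MeasurableSet {x | g x ≤ m} := measurableSet_le hg measurable_const
  have hint := integ_s hp hg hgp m
  have hsplit := integral_add_compl hs hint
  have hcompl : {x | g x ≤ m}ᶜ = {x | m < g x} := by ext x; simp [not_le]
  rw [hcompl] at hsplit
  have h1 : ∫ x in {x | g x ≤ m}, psgn (p-1) (m - g x) ∂ν
      = ∫ x in {x | g x ≤ m}, (m - g x) ^ (p-1) ∂ν := by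
    apply setIntegral_congr_fun hs
    intro x hx
    exact psgn_of_nonneg (sub_nonneg.2 hx)
  have h2 : ∫ x in {x | m < g x}, psgn (p-1) (m - g x) ∂ν
      = -∫ x in {x | m < g x}, (g x - m) ^ (p-1) ∂ν := by
    rw [← integral_neg]
    apply setIntegral_congr_fun (hcompl ▸ hs.compl)
    intro x hx
    show psgn (p-1) (m - g x) = -((g x - m) ^ (p-1))
    rw [psgn_of_neg (sub_neg.2 hx)]
    congr 2
    ring
  rw [h1, h2] at hsplit
  linarith


end Aux

theorem pth_mean_exists_unique_and_characterization (μ : MeasureTheory.Measure Ω)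
    [IsFiniteMeasure μ] (p : ℝ) (hp : 1 < p)
    (f : Ω → ℝ) (hf : MemLp f (ENNReal.ofReal p) μ)
    (A : Set Ω) (hA : MeasurableSet A) (h0 : 0 < μ A) (h1 : μ A < ⊤) :
    (∃! m : ℝ, ∀ a : ℝ, ∫ x in A, |f x - m| ^ p ∂μ ≤ ∫ x in A, |f x - a| ^ p ∂μ) ∧
    ∀ m : ℝ, (∀ a : ℝ, ∫ x in A, |f x - m| ^ p ∂μ ≤ ∫ x in A, |f x - a| ^ p ∂μ) ↔
      ∫ x in A ∩ {x | f x ≤ m}, (m - f x) ^ (p - 1) ∂μ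
        = ∫ x in A ∩ {x | m < f x}, (f x - m) ^ (p - 1) ∂μ := by
  have hq : (0:ℝ) < p - 1 := by linarith
  set ν := μ.restrict A with hνdef
  have hν0 : ν ≠ 0 := by
    rw [← Measure.measure_univ_ne_zero, Measure.restrict_apply_univ]
    exact h0.ne'
  have hm := hf.1
  set g := hm.mk f with hgdef
  have hgmeas : Measurable g := hm.stronglyMeasurable_mk.measurable
  have hfg : f =ᵐ[μ] g := hm.ae_eq_mk
  have hgp : MemLp g (ENNReal.ofReal p) ν := (hf.ae_eq hfg).restrict A
  have hfgν : f =ᵐ[ν] g := ae_restrict_of_ae hfg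
  have hφ : ∀ a : ℝ, ∫ x in A, |f x - a| ^ p ∂μ = ∫ x, |g x - a| ^ p ∂ν := fun a =>
    integral_congr_ae (hfgν.mono fun x hx => by show |f x - a| ^ p = |g x - a| ^ p; rw [hx])
  have hminiff : ∀ m : ℝ,
      (∀ a : ℝ, ∫ x in A, |f x - m| ^ p ∂μ ≤ ∫ x in A, |f x - a| ^ p ∂μ) ↔
      ∫ x, psgn (p-1) (m - g x) ∂ν = 0 := by
    intro m
    rw [← min_iff_psi_zero hp hgmeas hgp hν0 m]
    constructor
    · intro h a; rw [← hφ m, ← hφ a]; exact h a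
    · intro h a; rw [hφ m, hφ a]; exact h a
  have hchar : ∀ m : ℝ,
      (∫ x in A ∩ {x | f x ≤ m}, (m - f x) ^ (p - 1) ∂μ
        = ∫ x in A ∩ {x | m < f x}, (f x - m) ^ (p - 1) ∂μ) ↔
      ∫ x, psgn (p-1) (m - g x) ∂ν = 0 := by
    intro m
    have hE1 : ∫ x in A ∩ {x | f x ≤ m}, (m - f x) ^ (p - 1) ∂μ
        = ∫ x in {x | g x ≤ m}, (m - g x) ^ (p - 1) ∂ν := by
      have hset : (A ∩ {x | f x ≤ m} : Set Ω) =ᵐ[μ] (A ∩ {x | g x ≤ m} : Set Ω) := by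
        filter_upwards [hfg] with x hx
        show (x ∈ A ∧ f x ≤ m) = (x ∈ A ∧ g x ≤ m)
        rw [hx]
      have hr : μ.restrict (A ∩ {x | f x ≤ m}) = ν.restrict {x | g x ≤ m} := by
        rw [Measure.restrict_congr_set hset, hνdef,
          Measure.restrict_restrict (measurableSet_le hgmeas measurable_const),
          Set.inter_comm]
      rw [hr]
      refine integral_congr_ae ?_
      filter_upwards [ae_restrict_of_ae (μ := ν) hfgν] with x hx
      rw [hx]
    have hE2 : ∫ x in A ∩ {x | m < f x}, (f x - m) ^ (p - 1) ∂μ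
        = ∫ x in {x | m < g x}, (g x - m) ^ (p - 1) ∂ν := by
      have hset : (A ∩ {x | m < f x} : Set Ω) =ᵐ[μ] (A ∩ {x | m < g x} : Set Ω) := by
        filter_upwards [hfg] with x hx
        show (x ∈ A ∧ m < f x) = (x ∈ A ∧ m < g x)
        rw [hx]
      have hr : μ.restrict (A ∩ {x | m < f x}) = ν.restrict {x | m < g x} := by
        rw [Measure.restrict_congr_set hset, hνdef,
          Measure.restrict_restrict (measurableSet_lt measurable_const hgmeas),
          Set.inter_comm]
      rw [hr]
      refine integral_congr_ae ?_
      filter_upwards [ae_restrict_of_ae (μ := ν) hfgν] with x hx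
      rw [hx]
    rw [hE1, hE2, psi_split hp hgmeas hgp m]
    exact sub_eq_zero.symm
  constructor
  · obtain ⟨a, ha⟩ := exists_psi_neg hp hgmeas hgp hν0
    obtain ⟨b, hb⟩ := exists_psi_pos hp hgmeas hgp hν0
    have hmono := strictMono_psi hp hgmeas hgp hν0
    have hab : a < b := hmono.lt_iff_lt.1 (ha.trans hb)
    have hI : ∀ x ∈ Set.Icc a b,
        HasDerivWithinAt (fun a => ∫ x, |g x - a| ^ p ∂ν)
          (p * ∫ y, psgn (p-1) (x - g y) ∂ν) (Set.Icc a b) x :=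
      fun x _ => (hasDerivPhi hp hgmeas hgp x).hasDerivWithinAt
    have hdar := exists_hasDerivWithinAt_eq_of_gt_of_lt hab.le hI
      (m := 0) (mul_neg_of_pos_of_neg (by linarith) ha) (mul_pos (by linarith) hb)
    obtain ⟨c, -, hc⟩ := hdar
    have hψc : ∫ y, psgn (p-1) (c - g y) ∂ν = 0 := by
      rcases mul_eq_zero.1 hc with h | h
      · linarith
      · exact h
    exact ⟨c, (hminiff c).2 hψc,
      fun m' hm' => hmono.injective (((hminiff m').1 hm').trans hψc.symm)⟩
  · intro m
    rw [hminiff m]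
    exact (hchar m).symm
end

section
/- Let (Ω,𝓕,μ) be a measure space and f ∈ L^∞(Ω,𝓕,μ). For all k ≥ 1, the distance 𝒟_{∞,k}(f) from f to 𝒢_{∞,k} in L^∞ equals η_k(f) := inf over h = f a.e. of the infimum of α > 0 such that h(Ω) can be covered by at most k closed intervals of radius α. -/
open MeasureTheory ENNReal Filter Topology

variable {Ω : Type*} [MeasurableSpace Ω]

/-- `η_k(f)`: the infimum over representatives `h = f` a.e. of the radii `α > 0` such that
the range of `h` can be covered by at most `k` closed balls of radius `α`. -/
noncomputable def etaK (μ : MeasureTheory.Measure Ω) (k : ℕ) (f : Ω → ℝ) : ℝ :=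
  sInf {α : ℝ | 0 < α ∧ ∃ h : Ω → ℝ, Measurable h ∧ f =ᵐ[μ] h ∧
    ∃ t : Finset ℝ, t.card ≤ k ∧ ∀ x, ∃ c ∈ t, |h x - c| ≤ α}

/-- Nearest-center selection along a list. -/
noncomputable def pickAux (α : ℝ) (h : Ω → ℝ) (c₀ : ℝ) : List ℝ → Ω → ℝ
  | [] => fun _ => c₀
  | c :: L => fun x => if |h x - c| ≤ α then c else pickAux α h c₀ L x

lemma pickAux_measurable (α : ℝ) {h : Ω → ℝ} (hm : Measurable h) (c₀ : ℝ) :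
    ∀ L : List ℝ, Measurable (pickAux α h c₀ L)
  | [] => measurable_const
  | c :: L => by
      have hs : MeasurableSet {x | |h x - c| ≤ α} :=
        measurableSet_le ((hm.sub measurable_const).abs) measurable_const
      exact Measurable.ite hs measurable_const (pickAux_measurable α hm c₀ L)

lemma pickAux_mem (α : ℝ) (h : Ω → ℝ) (c₀ : ℝ) :
    ∀ (L : List ℝ) (x : Ω), pickAux α h c₀ L x = c₀ ∨ pickAux α h c₀ L x ∈ L
  | [], _ => Or.inl rfl
  | c :: L, x => by
      by_cases hc : |h x - c| ≤ α
      · exact Or.inr (by simp [pickAux, hc])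
      · rcases pickAux_mem α h c₀ L x with h1 | h1
        · exact Or.inl (by simpa [pickAux, hc] using h1)
        · exact Or.inr (by simp [pickAux, hc, h1])

lemma pickAux_close (α : ℝ) (h : Ω → ℝ) (c₀ : ℝ) :
    ∀ (L : List ℝ) (x : Ω), (∃ c ∈ L, |h x - c| ≤ α) → |h x - pickAux α h c₀ L x| ≤ α
  | [], x, hx => by simp at hx
  | c :: L, x, hx => by
      by_cases hc : |h x - c| ≤ α
      · simpa [pickAux, hc] using hc
      · rcases hx with ⟨c', hc', hcc'⟩
        rcases List.mem_cons.1 hc' with rfl | hc'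
        · exact absurd hcc' hc
        · simpa [pickAux, hc] using pickAux_close α h c₀ L x ⟨c', hc', hcc'⟩

theorem dist_to_Gpk_top_eq_etaK (μ : MeasureTheory.Measure Ω) (k : ℕ) (hk : 1 ≤ k)
    (f : Lp ℝ ⊤ μ) :
    Metric.infDist f (Gpk ⊤ μ k) = etaK μ k (f : Ω → ℝ) := by
  set S : Set ℝ := {α : ℝ | 0 < α ∧ ∃ h : Ω → ℝ, Measurable h ∧ (f : Ω → ℝ) =ᵐ[μ] h ∧
    ∃ t : Finset ℝ, t.card ≤ k ∧ ∀ x, ∃ c ∈ t, |h x - c| ≤ α} with hS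
  -- a measurable representative of f
  obtain ⟨h₀, hh₀m, hfh₀⟩ :
      ∃ h₀ : Ω → ℝ, Measurable h₀ ∧ (f : Ω → ℝ) =ᵐ[μ] h₀ := by
    obtain ⟨h₀, hm, he⟩ := (Lp.aestronglyMeasurable f)
    exact ⟨h₀, hm.measurable, he⟩
  -- a.e. bound on f
  set C : ℝ := (eLpNorm (f : Ω → ℝ) ⊤ μ).toReal with hC
  have hCbound : ∀ᵐ x ∂μ, ‖(f : Ω → ℝ) x‖ ≤ C := by
    filter_upwards [ae_le_eLpNormEssSup (f := (f : Ω → ℝ)) (μ := μ)] with x hx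
    have hne : eLpNormEssSup (f : Ω → ℝ) μ ≠ ∞ := by
      rw [← eLpNorm_exponent_top]; exact Lp.eLpNorm_ne_top f
    calc ‖(f : Ω → ℝ) x‖ = ((‖(f : Ω → ℝ) x‖₊ : ℝ≥0∞)).toReal := by simp
    _ ≤ (eLpNormEssSup (f : Ω → ℝ) μ).toReal := ENNReal.toReal_mono hne hx
    _ = C := by rw [hC, ← eLpNorm_exponent_top]
  have hC0 : 0 ≤ C := ENNReal.toReal_nonneg
  -- the Gpk set is nonempty: it contains 0
  have hGne : (Gpk ⊤ μ k).Nonempty := by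
    refine ⟨0, fun _ => 0, ⟨measurable_const, {0}, by simpa using hk, by simp⟩, ?_⟩
    exact Lp.coeFn_zero ℝ ⊤ μ
  -- the eta set is nonempty
  have hSne : S.Nonempty := by
    refine ⟨C + 1, by linarith, fun x => if |h₀ x| ≤ C then h₀ x else 0, ?_, ?_, {0}, by simpa using hk, ?_⟩
    · exact Measurable.ite (measurableSet_le hh₀m.abs measurable_const) hh₀m measurable_const
    · filter_upwards [hfh₀, hCbound] with x hx hx' using by
        rw [hx] at hx' ⊢; simp [abs_le.mp (by simpa using hx'), hx'.trans (le_refl C), if_pos (by simpa using hx')]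
    · intro x
      refine ⟨0, by simp, ?_⟩
      by_cases hx : |h₀ x| ≤ C <;> simp [hx] <;> linarith
  have hSbdd : BddBelow S := ⟨0, fun α hα => hα.1.le⟩
  apply le_antisymm
  · -- infDist ≤ sInf S
    refine le_csInf hSne ?_
    rintro α ⟨hα0, h, hhm, hfh, t, htk, hcov⟩
    rcases t.eq_empty_or_nonempty with rfl | ⟨c₀, hc₀⟩
    · -- Ω is empty
      have hΩ : IsEmpty Ω := ⟨fun x => by simpa using hcov x⟩
      have hg : MemLp (fun _ : Ω => (0:ℝ)) ⊤ μ :=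
        memLp_top_of_bound aestronglyMeasurable_const 0 (Eventually.of_forall fun x => by simp)
      have hmem : hg.toLp _ ∈ Gpk ⊤ μ k :=
        ⟨fun _ => 0, ⟨measurable_const, ∅, by simp, fun x => hΩ.elim x⟩, hg.coeFn_toLp⟩
      refine le_trans (Metric.infDist_le_dist_of_mem hmem) ?_
      have : dist f (hg.toLp _) = 0 := by
        rw [Lp.dist_def]
        have : eLpNorm ((f : Ω → ℝ) - ⇑(hg.toLp _)) ⊤ μ = 0 :=
          eLpNorm_eq_zero_of_ae_zero (Eventually.of_forall fun x => hΩ.elim x)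
        simp [this]
      linarith
    · -- t nonempty: build the nearest-center simple function
      set g : Ω → ℝ := pickAux α h c₀ t.toList with hgdef
      have hgm : Measurable g := pickAux_measurable α hhm c₀ _
      have hgmem : ∀ x, g x ∈ t := fun x => by
        rcases pickAux_mem α h c₀ t.toList x with h1 | h1
        · rw [hgdef]; rw [h1]; exact hc₀
        · exact Finset.mem_toList.mp h1
      have hgclose : ∀ x, |h x - g x| ≤ α := fun x => by
        refine pickAux_close α h c₀ t.toList x ?_
        obtain ⟨c, hc, hcc⟩ := hcov x
        exact ⟨c, Finset.mem_toList.mpr hc, hcc⟩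
      -- g is bounded
      obtain ⟨M, hM⟩ : ∃ M : ℝ, ∀ c ∈ t, |c| ≤ M :=
        ⟨t.sup' ⟨c₀, hc₀⟩ (fun c => |c|), fun c hc => Finset.le_sup' _ hc⟩
      have hgL : MemLp g ⊤ μ :=
        memLp_top_of_bound hgm.aestronglyMeasurable M
          (Eventually.of_forall fun x => by simpa using hM _ (hgmem x))
      have hmem : hgL.toLp g ∈ Gpk ⊤ μ k :=
        ⟨g, ⟨hgm, t, htk, hgmem⟩, hgL.coeFn_toLp⟩
      refine le_trans (Metric.infDist_le_dist_of_mem hmem) ?_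
      rw [Lp.dist_def]
      have hcongr : ((f : Ω → ℝ) - ⇑(hgL.toLp g)) =ᵐ[μ] (h - g) := by
        filter_upwards [hfh, hgL.coeFn_toLp] with x hx hx'
        simp [hx, hx']
      rw [eLpNorm_congr_ae hcongr]
      have hb : eLpNorm (h - g) ⊤ μ ≤ ENNReal.ofReal α := by
        rw [eLpNorm_exponent_top]
        exact eLpNormEssSup_le_of_ae_bound
          (Eventually.of_forall fun x => by simpa [Real.norm_eq_abs] using hgclose x)
      calc (eLpNorm (h - g) ⊤ μ).toReal ≤ (ENNReal.ofReal α).toReal :=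
            ENNReal.toReal_mono ENNReal.ofReal_ne_top hb
        _ = α := ENNReal.toReal_ofReal hα0.le
  · -- sInf S ≤ infDist
    have key : ∀ G ∈ Gpk ⊤ μ k, etaK μ k ((f : Ω → ℝ)) ≤ dist f G := by
      rintro G ⟨g', ⟨hg'm, s, hsk, hg's⟩, hGg'⟩
      set d : ℝ := dist f G with hd
      have hd0 : 0 ≤ d := dist_nonneg
      have hdbound : ∀ᵐ x ∂μ, |(f : Ω → ℝ) x - (G : Ω → ℝ) x| ≤ d := by
        filter_upwards [ae_le_eLpNormEssSup (f := ((f : Ω → ℝ) - (G : Ω → ℝ))) (μ := μ),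
          Lp.coeFn_sub f G] with x hx hx'
        have hne : eLpNormEssSup ((f : Ω → ℝ) - (G : Ω → ℝ)) μ ≠ ∞ := by
          rw [← eLpNorm_exponent_top]
          exact (eLpNorm_congr_ae (Lp.coeFn_sub f G)).symm ▸ Lp.eLpNorm_ne_top (f - G)
        have : ‖((f : Ω → ℝ) - (G : Ω → ℝ)) x‖ ≤ (eLpNormEssSup ((f : Ω → ℝ) - (G : Ω → ℝ)) μ).toReal := by
          calc ‖((f : Ω → ℝ) - (G : Ω → ℝ)) x‖
              = ((‖((f : Ω → ℝ) - (G : Ω → ℝ)) x‖₊ : ℝ≥0∞)).toReal := by simp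
            _ ≤ _ := ENNReal.toReal_mono hne hx
        have hdist : d = (eLpNormEssSup ((f : Ω → ℝ) - (G : Ω → ℝ)) μ).toReal := by
          rw [hd, Lp.dist_def, eLpNorm_exponent_top]
        rw [hdist]
        simpa [Real.norm_eq_abs] using this
      refine le_of_forall_pos_le_add fun ε hε => ?_
      refine csInf_le hSbdd ?_
      refine ⟨by linarith, fun x => if |h₀ x - g' x| ≤ d then h₀ x else g' x, ?_, ?_, s, hsk, ?_⟩
      · exact Measurable.ite
          (measurableSet_le ((hh₀m.sub hg'm).abs) measurable_const) hh₀m hg'm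
      · filter_upwards [hfh₀, hGg', hdbound] with x hx hx' hx''
        have hcond : |h₀ x - g' x| ≤ d := by rw [← hx, ← hx']; exact hx''
        simpa [hcond] using hx
      · intro x
        by_cases hx : |h₀ x - g' x| ≤ d
        · refine ⟨g' x, hg's x, ?_⟩
          simp only [if_pos hx]; linarith
        · refine ⟨g' x, hg's x, ?_⟩
          simp only [if_neg hx]; simp; linarith

    by_contra hlt
    push_neg at hlt
    obtain ⟨G, hG, hGd⟩ := (Metric.infDist_lt_iff hGne).mp hlt
    exact absurd hGd (not_lt.mpr (key G hG))
end

section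
/- Let (Ω,𝓕,μ) be a measure space, p ∈ [1,∞), f ∈ L^p, and let m < k be positive integers. If some g ∈ 𝒢_{p,m} attains the distance from f to 𝒢_{p,k}, then f ∈ 𝒢_{p,m} (i.e., f agrees a.e. with a simple function taking at most m values). -/
open MeasureTheory ENNReal Filter Topology

variable {Ω : Type*} [MeasurableSpace Ω]

private lemma key_abs {u c : ℝ} (h : c ^ 2 < c * u) : |u - c| < |u| := by
  nlinarith [abs_nonneg u, abs_nonneg (u - c), sq_abs u, sq_abs (u - c), sq_nonneg c]

private lemma key_abs' {u c : ℝ} (h : c ^ 2 < c * u) : |c| < |u| := by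
  nlinarith [abs_nonneg u, abs_nonneg c, sq_abs u, sq_abs c, le_abs_self (c * u),
    abs_mul c u]

theorem mem_Gpk_of_minimizer_in_smaller_class (μ : MeasureTheory.Measure Ω)
    (p : ℝ≥0∞) [Fact (1 ≤ p)] (hp : p ≠ ∞)
    (f : Lp ℝ p μ) (m k : ℕ) (hm : 1 ≤ m) (hmk : m < k)
    (g : Lp ℝ p μ) (hg : g ∈ Gpk p μ m)
    (hmin : ‖f - g‖ = Metric.infDist f (Gpk p μ k)) :
    f ∈ Gpk p μ m := by
  classical
  by_cases hfg : f = g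
  · rw [hfg]; exact hg
  exfalso
  obtain ⟨g₀, ⟨hg₀meas, s, hscard, hsmem⟩, hgg₀⟩ := hg
  have hp1 : (1 : ℝ≥0∞) ≤ p := Fact.out
  have hp0 : p ≠ 0 := (zero_lt_one.trans_le hp1).ne'
  set q := p.toReal with hq_def
  have hq : 0 < q := ENNReal.toReal_pos hp0 hp
  set F : Ω → ℝ := ⇑f with hF_def
  have hFmeas : Measurable F := (Lp.stronglyMeasurable f).measurable
  have hFg₀ : ¬ F =ᵐ[μ] g₀ := fun h => hfg (Lp.ext (h.trans hgg₀.symm))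
  have hfg_mem : MemLp (fun x => F x - g₀ x) p μ := by
    refine (Lp.memLp (f - g)).ae_eq ?_
    filter_upwards [Lp.coeFn_sub f g, hgg₀] with x h1 h2
    rw [h1, Pi.sub_apply, h2]
  -- the set where F ≠ g₀ has positive measure
  have hne_meas : μ {x | F x ≠ g₀ x} ≠ 0 := by
    intro h
    exact hFg₀ (by rwa [Filter.EventuallyEq, ae_iff])
  -- find ε with positive measure
  obtain ⟨n, hn⟩ : ∃ n : ℕ, μ {x | 1 / (n + 1 : ℝ) < |F x - g₀ x|} ≠ 0 := by
    by_contra h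
    push_neg at h
    apply hne_meas
    refine measure_mono_null ?_ (measure_iUnion_null h)
    intro x hx
    obtain ⟨n, hn⟩ := exists_nat_one_div_lt (abs_pos.mpr (sub_ne_zero.mpr hx))
    exact Set.mem_iUnion.2 ⟨n, hn⟩
  set ε : ℝ := 1 / (n + 1) with hε_def
  have hε : 0 < ε := by positivity
  -- find a sign c
  obtain ⟨c, hc0, hc⟩ : ∃ c : ℝ, c ≠ 0 ∧ μ {x | c ^ 2 < c * (F x - g₀ x)} ≠ 0 := by
    by_contra h
    push_neg at h
    apply hn
    refine measure_mono_null (?_ : _ ⊆ {x | ε ^ 2 < ε * (F x - g₀ x)} ∪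
        {x | (-ε) ^ 2 < (-ε) * (F x - g₀ x)}) ?_
    · intro x hx
      have hx' : ε < |F x - g₀ x| := hx
      rcases lt_abs.mp hx' with h1 | h1
      · left; show ε ^ 2 < ε * (F x - g₀ x); nlinarith
      · right; show (-ε) ^ 2 < (-ε) * (F x - g₀ x); nlinarith
    · exact measure_union_null (h ε hε.ne') (h (-ε) (neg_ne_zero.mpr hε.ne'))
  -- find a level a of g₀
  obtain ⟨a, ha_mem, ha⟩ : ∃ a ∈ s,
      μ {x | c ^ 2 < c * (F x - g₀ x) ∧ g₀ x = a} ≠ 0 := by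
    by_contra h
    push_neg at h
    apply hc
    refine measure_mono_null (fun x hx => ?_)
      ((measure_biUnion_null_iff s.countable_toSet).2 (fun a ha => h a ha))
    exact Set.mem_iUnion₂.2 ⟨g₀ x, hsmem x, hx, rfl⟩
  set B : Set Ω := {x | c ^ 2 < c * (F x - g₀ x) ∧ g₀ x = a} with hB_def
  have hBmeas : MeasurableSet B := by
    have h1 : MeasurableSet {x | c ^ 2 < c * (F x - g₀ x)} :=
      measurableSet_lt measurable_const (measurable_const.mul (hFmeas.sub hg₀meas))
    have h2 : MeasurableSet {x | g₀ x = a} := hg₀meas (measurableSet_singleton a)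
    exact (Set.setOf_and ▸ h1.inter h2 :)
  have hBfin : μ B < ∞ := by
    have hlt := hfg_mem.meas_ge_lt_top' hp0 hp (ε := ENNReal.ofReal |c|)
      ((ENNReal.ofReal_pos.mpr (abs_pos.mpr hc0)).ne')
    refine lt_of_le_of_lt (measure_mono ?_) hlt
    intro x hx
    have : |c| ≤ |F x - g₀ x| := (key_abs' hx.1).le
    simpa [Real.enorm_eq_ofReal_abs] using ENNReal.ofReal_le_ofReal this
  -- new competitor
  set h₀ : Ω → ℝ := fun x => g₀ x + B.indicator (fun _ => c) x with hh₀def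
  have hh₀meas : Measurable h₀ := hg₀meas.add (measurable_const.indicator hBmeas)
  have hh₀simple : IsSimpleLE k h₀ := by
    refine ⟨hh₀meas, insert (a + c) s, ?_, ?_⟩
    · calc (insert (a + c) s).card ≤ s.card + 1 := Finset.card_insert_le _ _
        _ ≤ m + 1 := by omega
        _ ≤ k := hmk
    · intro x
      by_cases hx : x ∈ B
      · simp only [hh₀def, Set.indicator_of_mem hx, hx.2]
        exact Finset.mem_insert_self _ _
      · simp only [hh₀def, Set.indicator_of_notMem hx, add_zero]
        exact Finset.mem_insert_of_mem (hsmem x)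
  have hg₀mem : MemLp g₀ p μ := (Lp.memLp g).ae_eq hgg₀
  have hh₀mem : MemLp h₀ p μ :=
    hg₀mem.add (memLp_indicator_const p hBmeas c (Or.inr hBfin.ne))
  set h : Lp ℝ p μ := hh₀mem.toLp h₀ with hh_def
  have hhG : h ∈ Gpk p μ k := ⟨h₀, hh₀simple, hh₀mem.coeFn_toLp⟩
  -- pointwise comparisons
  have key_lt : ∀ x ∈ B, |F x - h₀ x| < |F x - g₀ x| := by
    intro x hx
    have hE : F x - h₀ x = (F x - g₀ x) - c := by
      simp only [hh₀def, Set.indicator_of_mem hx]; ring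
    rw [hE]
    exact key_abs hx.1
  have key_le : ∀ x, |F x - h₀ x| ≤ |F x - g₀ x| := by
    intro x
    by_cases hx : x ∈ B
    · exact (key_lt x hx).le
    · simp [hh₀def, Set.indicator_of_notMem hx]
  -- strict lintegral inequality
  have hint : ∫⁻ x, (‖F x - h₀ x‖₊ : ℝ≥0∞) ^ q ∂μ
      < ∫⁻ x, (‖F x - g₀ x‖₊ : ℝ≥0∞) ^ q ∂μ := by
    refine lintegral_strict_mono_of_ae_le_of_ae_lt_on ?_ ?_ ?_ ha ?_
    · exact ((hFmeas.sub hg₀meas).nnnorm.coe_nnreal_ennreal.pow_const q).aemeasurable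
    · have hmem : MemLp (fun x => F x - h₀ x) p μ := (Lp.memLp f).sub hh₀mem
      exact (lintegral_rpow_enorm_lt_top_of_eLpNorm_lt_top hp0 hp hmem.eLpNorm_lt_top).ne
    · refine Filter.Eventually.of_forall (fun x => ?_)
      refine ENNReal.rpow_le_rpow ?_ hq.le
      rw [ENNReal.coe_le_coe, ← NNReal.coe_le_coe]
      simpa [Real.norm_eq_abs] using key_le x
    · refine Filter.Eventually.of_forall (fun x hx => ?_)
      refine ENNReal.rpow_lt_rpow ?_ hq
      rw [ENNReal.coe_lt_coe, ← NNReal.coe_lt_coe]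
      simpa [Real.norm_eq_abs] using key_lt x hx
  have hsnorm : eLpNorm (fun x => F x - h₀ x) p μ
      < eLpNorm (fun x => F x - g₀ x) p μ := by
    rw [eLpNorm_eq_lintegral_rpow_enorm_toReal hp0 hp, eLpNorm_eq_lintegral_rpow_enorm_toReal hp0 hp]
    exact ENNReal.rpow_lt_rpow hint (by positivity)
  have h1 : ‖f - h‖ < ‖f - g‖ := by
    rw [Lp.norm_def, Lp.norm_def]
    apply ENNReal.toReal_strict_mono (Lp.eLpNorm_ne_top (f - g))
    calc eLpNorm (⇑(f - h)) p μ = eLpNorm (fun x => F x - h₀ x) p μ := by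
          refine eLpNorm_congr_ae ?_
          filter_upwards [Lp.coeFn_sub f h, hh₀mem.coeFn_toLp] with x h1 h2
          rw [h1, Pi.sub_apply, h2]
      _ < eLpNorm (fun x => F x - g₀ x) p μ := hsnorm
      _ = eLpNorm (⇑(f - g)) p μ := by
          refine (eLpNorm_congr_ae ?_).symm
          filter_upwards [Lp.coeFn_sub f g, hgg₀] with x h1 h2
          rw [h1, Pi.sub_apply, h2]
  have h2 : ‖f - g‖ ≤ ‖f - h‖ := by
    rw [hmin, ← dist_eq_norm]
    exact Metric.infDist_le_dist_of_mem hhG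
  exact absurd h1 (not_lt.mpr h2)
end

section
/- Let (Ω,𝓕,μ) be a finite measure space, p ∈ [1,∞), and f ∈ L^p. Then for all k ≥ 1, 𝒟_{p,k}(f) ≤ Var_{p,k}(f,Ω) ≤ 2·𝒟_{p,k}(f). -/
open MeasureTheory ENNReal Filter Topology

variable {Ω : Type*} [MeasurableSpace Ω]

/-- `var_p(f,A)`: the normalized `p`-variation of `f` on a set `A` of positive finite measure. -/
noncomputable def varP (μ : MeasureTheory.Measure Ω) (p : ℝ) (f : Ω → ℝ) (A : Set Ω) : ℝ :=
  if 0 < μ A ∧ μ A < ⊤ then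
    ((μ A).toReal⁻¹ * ∫ z in A ×ˢ A, |f z.1 - f z.2| ^ p ∂(μ.prod μ)) ^ (1 / p)
  else 0

/-- `P` is a finite measurable partition of `A`. -/
def IsPartitionOf (A : Set Ω) (P : Finset (Set Ω)) : Prop :=
  (∀ B ∈ P, MeasurableSet B) ∧ ((P : Set (Set Ω)).PairwiseDisjoint id) ∧
    ⋃₀ (P : Set (Set Ω)) = A

/-- total `p`-variation of `f` with respect to the collection `P`. -/
noncomputable def varTot (μ : MeasureTheory.Measure Ω) (p : ℝ) (f : Ω → ℝ)
    (P : Finset (Set Ω)) : ℝ :=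
  (∑ B ∈ P, varP μ p f B ^ p) ^ (1 / p)

/-- `Var_{p,k}(f,A)`: infimum of the total `p`-variation over measurable partitions of `A`
into at most `k` sets. -/
noncomputable def VarOn (μ : MeasureTheory.Measure Ω) (p : ℝ) (k : ℕ) (f : Ω → ℝ)
    (A : Set Ω) : ℝ :=
  sInf {v | ∃ P : Finset (Set Ω), IsPartitionOf A P ∧ P.card ≤ k ∧ v = varTot μ p f P}

/-- `Var_{p,k}(f)`: the total `p`-variation, a supremum over finite measure sets. -/
noncomputable def Var (μ : MeasureTheory.Measure Ω) (p : ℝ) (k : ℕ) (f : Ω → ℝ) : ℝ :=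
  sSup {v | ∃ A : Set Ω, MeasurableSet A ∧ μ A < ⊤ ∧ v = VarOn μ p k f A}

/-! ### Auxiliary lemmas -/

lemma auxCont {p : ℝ} (hp : 0 ≤ p) : Continuous fun t : ℝ => |t| ^ p :=
  continuous_abs.rpow_const (fun _ => Or.inr hp)

lemma auxConvex {p : ℝ} (hp : 1 ≤ p) : ConvexOn ℝ Set.univ fun t : ℝ => |t| ^ p := by
  have himg : (fun t : ℝ => |t|) '' Set.univ = Set.Ici (0:ℝ) := by
    ext x
    simp only [Set.image_univ, Set.mem_range, Set.mem_Ici]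
    constructor
    · rintro ⟨t, rfl⟩; exact abs_nonneg t
    · intro hx; exact ⟨x, abs_of_nonneg hx⟩
  have hg : ConvexOn ℝ ((fun t : ℝ => |t|) '' Set.univ) fun x : ℝ => x ^ p := by
    rw [himg]; exact convexOn_rpow hp
  have hmono : MonotoneOn (fun x : ℝ => x ^ p) ((fun t : ℝ => |t|) '' Set.univ) := by
    rw [himg]
    intro a ha b hb hab
    exact Real.rpow_le_rpow ha hab (le_trans zero_le_one hp)
  have habs : ConvexOn ℝ Set.univ (fun t : ℝ => |t|) := by
    exact (convexOn_univ_norm : ConvexOn ℝ Set.univ (norm : ℝ → ℝ))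
  exact hg.comp habs hmono

lemma enn_pow_eq {p : ℝ} (hp : 0 ≤ p) (r : ℝ) :
    (‖|r| ^ p‖₊ : ℝ≥0∞) = (‖r‖₊ : ℝ≥0∞) ^ p := by
  rw [← enorm_eq_nnnorm, ← enorm_eq_nnnorm, Real.enorm_eq_ofReal (Real.rpow_nonneg (abs_nonneg r) p),
    ← ENNReal.ofReal_rpow_of_nonneg (abs_nonneg r) hp, ← Real.enorm_eq_ofReal_abs]

lemma ofReal_abs_rpow {p : ℝ} (hp : 0 ≤ p) (r : ℝ) :
    ENNReal.ofReal (|r| ^ p) = (‖r‖₊ : ℝ≥0∞) ^ p := by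
  rw [← enorm_eq_nnnorm, ← ENNReal.ofReal_rpow_of_nonneg (abs_nonneg r) hp, ← Real.enorm_eq_ofReal_abs]

lemma auxIntProd (μ : MeasureTheory.Measure Ω) [IsFiniteMeasure μ] {p : ℝ} (hp : 1 ≤ p)
    {F : Ω → ℝ} (hF : MemLp F (ENNReal.ofReal p) μ) :
    Integrable (fun z : Ω × Ω => |F z.1 - F z.2| ^ p) (μ.prod μ) := by
  have hp0 : 0 < p := lt_of_lt_of_le one_pos hp
  have hq0 : ENNReal.ofReal p ≠ 0 := by simp [ENNReal.ofReal_eq_zero]; linarith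
  have h1 : Integrable (fun x => |F x| ^ p) μ := by
    have := hF.integrable_norm_rpow hq0 ENNReal.ofReal_ne_top
    simpa [Real.norm_eq_abs, ENNReal.toReal_ofReal hp0.le] using this
  have hfst : Integrable (fun z : Ω × Ω => |F z.1| ^ p) (μ.prod μ) := by
    have := h1.mul_prod (μ := μ) (ν := μ) (integrable_const (1:ℝ))
    simpa using this
  have hsnd : Integrable (fun z : Ω × Ω => |F z.2| ^ p) (μ.prod μ) := by
    have := Integrable.mul_prod (μ := μ) (ν := μ) (integrable_const (1:ℝ)) h1
    simpa using this
  have hbound : Integrable (fun z : Ω × Ω => (2:ℝ) ^ p * (|F z.1| ^ p + |F z.2| ^ p)) (μ.prod μ) :=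
    (hfst.add hsnd).const_mul _
  have hme : AEStronglyMeasurable (fun z : Ω × Ω => |F z.1 - F z.2| ^ p) (μ.prod μ) := by
    have hsub : AEStronglyMeasurable (fun z : Ω × Ω => F z.1 - F z.2) (μ.prod μ) :=
      hF.aestronglyMeasurable.comp_fst.sub hF.aestronglyMeasurable.comp_snd
    exact (auxCont hp0.le).comp_aestronglyMeasurable hsub
  refine hbound.mono' hme (Filter.Eventually.of_forall fun z => ?_)
  have key : ∀ a b : ℝ, |a - b| ^ p ≤ 2 ^ p * (|a| ^ p + |b| ^ p) := by
    intro a b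
    have h2 : |a - b| ≤ 2 * max |a| |b| := by
      calc |a - b| ≤ |a| + |b| := abs_sub a b
        _ ≤ 2 * max |a| |b| := by
          rcases le_total |a| |b| with h | h <;> simp [max_eq_right, max_eq_left, h] <;> linarith
    calc |a - b| ^ p ≤ (2 * max |a| |b|) ^ p :=
          Real.rpow_le_rpow (abs_nonneg _) h2 hp0.le
      _ = 2 ^ p * max |a| |b| ^ p := Real.mul_rpow (by norm_num) (le_max_of_le_left (abs_nonneg a))
      _ ≤ 2 ^ p * (|a| ^ p + |b| ^ p) := by
          gcongr
          rcases le_total |a| |b| with h | h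
          · rw [max_eq_right h]
            exact le_add_of_nonneg_left (Real.rpow_nonneg (abs_nonneg a) p)
          · rw [max_eq_left h]
            exact le_add_of_nonneg_right (Real.rpow_nonneg (abs_nonneg b) p)
  calc ‖|F z.1 - F z.2| ^ p‖ = |F z.1 - F z.2| ^ p := by
        rw [Real.norm_eq_abs, abs_of_nonneg (Real.rpow_nonneg (abs_nonneg _) p)]
    _ ≤ 2 ^ p * (|F z.1| ^ p + |F z.2| ^ p) := key _ _

/-- Bochner set integral of `|·|^p` equals `toReal` of the corresponding lintegral. -/
lemma integral_abs_rpow_eq_toReal {p : ℝ} (hp : 0 < p) {α : Type*} [MeasurableSpace α]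
    (ν : MeasureTheory.Measure α) {G : α → ℝ} (hG : AEStronglyMeasurable G ν) :
    ∫ z, |G z| ^ p ∂ν = (∫⁻ z, (‖G z‖₊ : ℝ≥0∞) ^ p ∂ν).toReal := by
  rw [integral_eq_lintegral_of_nonneg_ae
      (Filter.Eventually.of_forall fun z => Real.rpow_nonneg (abs_nonneg _) _)
      ((auxCont hp.le).comp_aestronglyMeasurable hG)]
  congr 1
  exact lintegral_congr fun z => ofReal_abs_rpow hp.le _

lemma varP_nonneg (μ : MeasureTheory.Measure Ω) (p : ℝ) (F : Ω → ℝ) (A : Set Ω) :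
    0 ≤ varP μ p F A := by
  rw [varP]
  split_ifs with h
  · exact Real.rpow_nonneg (mul_nonneg (inv_nonneg.mpr ENNReal.toReal_nonneg)
      (integral_nonneg fun z => Real.rpow_nonneg (abs_nonneg _) _)) _
  · exact le_refl 0

lemma varTot_nonneg (μ : MeasureTheory.Measure Ω) (p : ℝ) (F : Ω → ℝ) (P : Finset (Set Ω)) :
    0 ≤ varTot μ p F P :=
  Real.rpow_nonneg (Finset.sum_nonneg fun B _ => Real.rpow_nonneg (varP_nonneg μ p F B) _) _

lemma varP_le_two (μ : MeasureTheory.Measure Ω) [IsFiniteMeasure μ] {p : ℝ} (hp : 1 ≤ p)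
    {F : Ω → ℝ} (hF : MemLp F (ENNReal.ofReal p) μ)
    (B : Set Ω) (c : ℝ) :
    varP μ p F B ≤ 2 * (∫ x in B, |F x - c| ^ p ∂μ) ^ (1 / p) := by
  have hp0 : 0 < p := lt_of_lt_of_le one_pos hp
  have hint0 : (0:ℝ) ≤ ∫ x in B, |F x - c| ^ p ∂μ :=
    integral_nonneg fun x => Real.rpow_nonneg (abs_nonneg _) _
  have hrhs0 : (0:ℝ) ≤ (∫ x in B, |F x - c| ^ p ∂μ) ^ (1/p) := Real.rpow_nonneg hint0 _
  rw [varP]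
  split_ifs with h
  swap
  · linarith
  obtain ⟨hB0, hBt⟩ := h
  have hq0 : ENNReal.ofReal p ≠ 0 := by simp [ENNReal.ofReal_eq_zero]; linarith
  have hFae : AEStronglyMeasurable F μ := hF.aestronglyMeasurable
  set K : ℝ≥0∞ := ∫⁻ x in B, (‖F x - c‖₊ : ℝ≥0∞) ^ p ∂μ with hKdef
  set J : ℝ≥0∞ := ∫⁻ z in B ×ˢ B, (‖F z.1 - F z.2‖₊ : ℝ≥0∞) ^ p ∂(μ.prod μ) with hJdef
  have hGae : AEStronglyMeasurable (fun z : Ω × Ω => F z.1 - F z.2) (μ.prod μ) :=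
    hFae.comp_fst.sub hFae.comp_snd
  -- Step a: real integral = J.toReal
  have hIJ : ∫ z in B ×ˢ B, |F z.1 - F z.2| ^ p ∂(μ.prod μ) = J.toReal := by
    have := integral_abs_rpow_eq_toReal hp0 ((μ.prod μ).restrict (B ×ˢ B)) hGae.restrict
    simpa using this
  -- K is finite
  have hKtop : K ≠ ⊤ := by
    have h1 : MemLp (fun x => F x - c) (ENNReal.ofReal p) μ := hF.sub (memLp_const c)
    have h2 := lintegral_rpow_enorm_lt_top_of_eLpNorm_lt_top hq0 ENNReal.ofReal_ne_top h1.2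
    rw [ENNReal.toReal_ofReal hp0.le] at h2
    exact ne_top_of_le_ne_top h2.ne (lintegral_mono' Measure.restrict_le_self le_rfl)
  -- marginals
  have hsub1 : AEStronglyMeasurable (fun x => F x - c) (μ.restrict B) :=
    hFae.restrict.sub aestronglyMeasurable_const
  have hu : AEMeasurable (fun x => (‖F x - c‖₊ : ℝ≥0∞) ^ p) (μ.restrict B) :=
    (ENNReal.continuous_rpow_const.measurable).comp_aemeasurable hsub1.enorm
  have marg1 : ∫⁻ z in B ×ˢ B, (‖F z.1 - c‖₊ : ℝ≥0∞) ^ p ∂(μ.prod μ) = K * μ B := by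
    rw [← Measure.prod_restrict]
    have haem : AEMeasurable (fun z : Ω × Ω => (‖F z.1 - c‖₊ : ℝ≥0∞) ^ p)
        ((μ.restrict B).prod (μ.restrict B)) :=
      (ENNReal.continuous_rpow_const.measurable).comp_aemeasurable hsub1.comp_fst.enorm
    rw [MeasureTheory.lintegral_prod _ haem]
    simp only [lintegral_const, Measure.restrict_apply_univ]
    exact lintegral_mul_const'' _ hu
  have marg2 : ∫⁻ z in B ×ˢ B, (‖c - F z.2‖₊ : ℝ≥0∞) ^ p ∂(μ.prod μ) = K * μ B := by
    have hrev : ∀ z : Ω × Ω, (‖c - F z.2‖₊ : ℝ≥0∞) ^ p = (‖F z.2 - c‖₊ : ℝ≥0∞) ^ p := by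
      intro z
      rw [show c - F z.2 = -(F z.2 - c) by ring, nnnorm_neg]
    rw [lintegral_congr hrev, ← Measure.prod_restrict]
    have haem : AEMeasurable (fun z : Ω × Ω => (‖F z.2 - c‖₊ : ℝ≥0∞) ^ p)
        ((μ.restrict B).prod (μ.restrict B)) :=
      (ENNReal.continuous_rpow_const.measurable).comp_aemeasurable hsub1.comp_snd.enorm
    rw [MeasureTheory.lintegral_prod _ haem]
    have inner : ∀ x : Ω, (∫⁻ y, (‖F y - c‖₊ : ℝ≥0∞) ^ p ∂(μ.restrict B)) = K := fun _ => rfl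
    calc ∫⁻ x, ∫⁻ y, (‖F y - c‖₊ : ℝ≥0∞) ^ p ∂(μ.restrict B) ∂(μ.restrict B)
        = ∫⁻ _, K ∂(μ.restrict B) := by rfl
      _ = K * μ B := by rw [lintegral_const, Measure.restrict_apply_univ]
  -- Minkowski
  have tri : J ^ (1/p) ≤ 2 * K ^ (1/p) * (μ B) ^ (1/p) := by
    set e1 : Ω × Ω → ℝ≥0∞ := fun z => (‖F z.1 - c‖₊ : ℝ≥0∞) with he1
    set e2 : Ω × Ω → ℝ≥0∞ := fun z => (‖c - F z.2‖₊ : ℝ≥0∞) with he2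
    have mono : J ≤ ∫⁻ z in B ×ˢ B, (e1 + e2) z ^ p ∂(μ.prod μ) := by
      refine lintegral_mono fun z => ?_
      refine ENNReal.rpow_le_rpow ?_ hp0.le
      have h3 : ‖F z.1 - F z.2‖₊ ≤ ‖F z.1 - c‖₊ + ‖c - F z.2‖₊ := by
        have h4 : F z.1 - F z.2 = (F z.1 - c) + (c - F z.2) := by ring
        rw [h4]; exact nnnorm_add_le _ _
      simp only [Pi.add_apply, he1, he2]
      exact_mod_cast h3
    have hae1 : AEMeasurable e1 ((μ.prod μ).restrict (B ×ˢ B)) := by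
      rw [← Measure.prod_restrict]; exact hsub1.comp_fst.enorm
    have hae2 : AEMeasurable e2 ((μ.prod μ).restrict (B ×ˢ B)) := by
      rw [← Measure.prod_restrict]
      exact (aestronglyMeasurable_const.sub hFae.restrict).comp_snd.enorm
    calc J ^ (1/p) ≤ (∫⁻ z in B ×ˢ B, (e1 + e2) z ^ p ∂(μ.prod μ)) ^ (1/p) :=
          ENNReal.rpow_le_rpow mono (by positivity)
      _ ≤ (∫⁻ z in B ×ˢ B, e1 z ^ p ∂(μ.prod μ)) ^ (1/p)
          + (∫⁻ z in B ×ˢ B, e2 z ^ p ∂(μ.prod μ)) ^ (1/p) :=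
          ENNReal.lintegral_Lp_add_le hae1 hae2 hp
      _ = 2 * (K * μ B) ^ (1/p) := by rw [he1, he2]; rw [marg1, marg2, two_mul]
      _ = 2 * K ^ (1/p) * (μ B) ^ (1/p) := by
          rw [ENNReal.mul_rpow_of_nonneg _ _ (by positivity : (0:ℝ) ≤ 1/p), mul_assoc]
  -- assemble
  have key : ((μ B)⁻¹ * J) ^ (1/p) ≤ 2 * K ^ (1/p) := by
    calc ((μ B)⁻¹ * J) ^ (1/p) = (μ B)⁻¹ ^ (1/p) * J ^ (1/p) :=
          ENNReal.mul_rpow_of_nonneg _ _ (by positivity)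
      _ ≤ (μ B)⁻¹ ^ (1/p) * (2 * K ^ (1/p) * (μ B) ^ (1/p)) := by gcongr
      _ = 2 * K ^ (1/p) * ((μ B)⁻¹ ^ (1/p) * (μ B) ^ (1/p)) := by ring
      _ = 2 * K ^ (1/p) * (((μ B)⁻¹ * μ B) ^ (1/p)) := by
          rw [ENNReal.mul_rpow_of_nonneg _ _ (by positivity : (0:ℝ) ≤ 1/p)]
      _ = 2 * K ^ (1/p) := by
          rw [ENNReal.inv_mul_cancel hB0.ne' hBt.ne, ENNReal.one_rpow, mul_one]
  have hfin : 2 * K ^ (1/p) ≠ ⊤ := by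
    apply ENNReal.mul_ne_top (by norm_num)
    exact ENNReal.rpow_ne_top_of_nonneg (by positivity) hKtop
  have final := ENNReal.toReal_mono hfin key
  rw [hIJ]
  have lhsEq : ((μ B).toReal⁻¹ * J.toReal) ^ (1/p) = (((μ B)⁻¹ * J) ^ (1/p)).toReal := by
    rw [← ENNReal.toReal_inv, ← ENNReal.toReal_mul, ENNReal.toReal_rpow]
  rw [lhsEq]
  have rhsEq : (2 * K ^ (1/p)).toReal = 2 * (∫ x in B, |F x - c| ^ p ∂μ) ^ (1/p) := by
    rw [ENNReal.toReal_mul, integral_abs_rpow_eq_toReal hp0 (μ.restrict B) hsub1,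
      ENNReal.toReal_rpow]
    norm_num
    rfl
  rw [← rhsEq]
  exact final

lemma jensen_bound (μ : MeasureTheory.Measure Ω) [IsFiniteMeasure μ] {p : ℝ} (hp : 1 ≤ p)
    {F : Ω → ℝ} (hF : MemLp F (ENNReal.ofReal p) μ)
    {B : Set Ω} (hB0 : 0 < μ B) :
    ∫ x in B, |F x - ⨍ y in B, F y ∂μ| ^ p ∂μ
      ≤ (μ B).toReal⁻¹ * ∫ z in B ×ˢ B, |F z.1 - F z.2| ^ p ∂(μ.prod μ) := by
  have hp0 : 0 < p := lt_of_lt_of_le one_pos hp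
  set ν := μ.restrict B with hν
  haveI : IsFiniteMeasure ν := by
    constructor
    rw [hν, Measure.restrict_apply_univ]
    exact measure_lt_top μ B
  haveI : NeZero ν := by
    constructor
    rw [hν, Ne, Measure.restrict_eq_zero]
    exact hB0.ne'
  have htB : (0:ℝ) < (μ B).toReal := ENNReal.toReal_pos hB0.ne' (measure_ne_top μ B)
  have hνu : ν Set.univ = μ B := by rw [hν, Measure.restrict_apply_univ]
  have hνt : ν.real Set.univ = (μ B).toReal := by show (ν Set.univ).toReal = _; rw [hνu]
  set m := ⨍ y, F y ∂ν with hm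
  have hq1 : (1:ℝ≥0∞) ≤ ENNReal.ofReal p := by
    rw [← ENNReal.ofReal_one]
    exact ENNReal.ofReal_le_ofReal hp
  have hFB : Integrable F ν := (hF.restrict B).integrable hq1
  have hGi := auxIntProd μ hp hF
  have hGiB : Integrable (fun z : Ω × Ω => |F z.1 - F z.2| ^ p) (ν.prod ν) := by
    rw [hν, Measure.prod_restrict]
    exact hGi.integrableOn
  have hae : ∀ᵐ x ∂ν, Integrable (fun y => |F x - F y| ^ p) ν := hGiB.prod_right_ae
  have hpt : ∀ᵐ x ∂ν, |F x - m| ^ p ≤ (μ B).toReal⁻¹ * ∫ y, |F x - F y| ^ p ∂ν := by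
    filter_upwards [hae] with x hx
    have hint1 : Integrable (fun y => F x - F y) ν := (integrable_const (F x)).sub hFB
    have hJ := (auxConvex hp).map_average_le (auxCont hp0.le).continuousOn isClosed_univ
      (Eventually.of_forall fun y => Set.mem_univ _) hint1 hx
    have havg : ⨍ y, (F x - F y) ∂ν = F x - m := by
      rw [hm, average_eq, average_eq, integral_sub (integrable_const _) hFB, integral_const,
        hνt, smul_eq_mul, smul_eq_mul, smul_eq_mul]
      field_simp
    rw [havg] at hJ
    calc |F x - m| ^ p ≤ ⨍ y, |F x - F y| ^ p ∂ν := hJ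
      _ = (μ B).toReal⁻¹ * ∫ y, |F x - F y| ^ p ∂ν := by
          rw [average_eq, hνt, smul_eq_mul]
  have hRint : Integrable (fun x => (μ B).toReal⁻¹ * ∫ y, |F x - F y| ^ p ∂ν) ν := by
    have := hGiB.integral_prod_left
    exact this.const_mul _
  calc ∫ x in B, |F x - ⨍ y in B, F y ∂μ| ^ p ∂μ
      = ∫ x, |F x - m| ^ p ∂ν := rfl
    _ ≤ ∫ x, (μ B).toReal⁻¹ * ∫ y, |F x - F y| ^ p ∂ν ∂ν :=
        integral_mono_of_nonneg
          (Eventually.of_forall fun x => Real.rpow_nonneg (abs_nonneg _) _) hRint hpt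
    _ = (μ B).toReal⁻¹ * ∫ x, ∫ y, |F x - F y| ^ p ∂ν ∂ν := integral_const_mul _ _
    _ = (μ B).toReal⁻¹ * ∫ z, |F z.1 - F z.2| ^ p ∂(ν.prod ν) := by
        rw [integral_prod _ hGiB]
    _ = (μ B).toReal⁻¹ * ∫ z in B ×ˢ B, |F z.1 - F z.2| ^ p ∂(μ.prod μ) := by
        rw [hν, Measure.prod_restrict]

lemma dist_eq_rpow (μ : MeasureTheory.Measure Ω) [IsFiniteMeasure μ] {p : ℝ} (hp : 1 ≤ p)
    [Fact (1 ≤ ENNReal.ofReal p)] (f g : Lp ℝ (ENNReal.ofReal p) μ) {G : Ω → ℝ}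
    (hG : (g : Ω → ℝ) =ᵐ[μ] G) :
    dist f g = (∫ x, |(f : Ω → ℝ) x - G x| ^ p ∂μ) ^ (1 / p) := by
  have hp0 : 0 < p := lt_of_lt_of_le one_pos hp
  have hq0 : ENNReal.ofReal p ≠ 0 := by simp [ENNReal.ofReal_eq_zero]; linarith
  have hmem : MemLp (fun x => (f : Ω → ℝ) x - G x) (ENNReal.ofReal p) μ :=
    (Lp.memLp f).sub ((Lp.memLp g).ae_eq hG)
  rw [Lp.dist_def]
  have hcong : eLpNorm (⇑f - ⇑g) (ENNReal.ofReal p) μ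
      = eLpNorm (fun x => (f : Ω → ℝ) x - G x) (ENNReal.ofReal p) μ :=
    eLpNorm_congr_ae (EventuallyEq.sub (EventuallyEq.refl _ _) hG)
  have htR : (ENNReal.ofReal p).toReal = p := ENNReal.toReal_ofReal hp0.le
  rw [hcong, hmem.eLpNorm_eq_integral_rpow_norm hq0 ENNReal.ofReal_ne_top, htR,
    ENNReal.toReal_ofReal (Real.rpow_nonneg
      (integral_nonneg fun x => Real.rpow_nonneg (norm_nonneg _) _) _), one_div]
  simp_rw [Real.norm_eq_abs]

lemma integral_partition (μ : MeasureTheory.Measure Ω) {P : Finset (Set Ω)}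
    (hP : IsPartitionOf Set.univ P) {h : Ω → ℝ} (hint : Integrable h μ) :
    ∫ x, h x ∂μ = ∑ B ∈ P, ∫ x in B, h x ∂μ := by
  obtain ⟨hm, hd, hu⟩ := hP
  have hU : (⋃ B ∈ P, B) = Set.univ := by
    rw [← hu]
    ext x
    simp
  calc ∫ x, h x ∂μ = ∫ x in ⋃ B ∈ P, B, h x ∂μ := by rw [hU, Measure.restrict_univ]
    _ = ∑ B ∈ P, ∫ x in B, h x ∂μ :=
        integral_biUnion_finset P hm hd fun B _ => hint.integrableOn

theorem infDist_le_VarOn_univ_le_two_infDist (μ : MeasureTheory.Measure Ω) [IsFiniteMeasure μ]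
    (p : ℝ) (hp : 1 ≤ p) [Fact (1 ≤ ENNReal.ofReal p)]
    (f : Lp ℝ (ENNReal.ofReal p) μ) (k : ℕ) (hk : 1 ≤ k) :
    Metric.infDist f (Gpk (ENNReal.ofReal p) μ k) ≤ VarOn μ p k (f : Ω → ℝ) Set.univ ∧
    VarOn μ p k (f : Ω → ℝ) Set.univ ≤ 2 * Metric.infDist f (Gpk (ENNReal.ofReal p) μ k) := by
  classical
  have hp0 : 0 < p := lt_of_lt_of_le one_pos hp
  have hq0 : ENNReal.ofReal p ≠ 0 := by simp [ENNReal.ofReal_eq_zero]; linarith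
  set F : Ω → ℝ := (f : Ω → ℝ) with hFdef
  have hFmem : MemLp F (ENNReal.ofReal p) μ := Lp.memLp f
  set S : Set ℝ :=
    {v | ∃ P : Finset (Set Ω), IsPartitionOf Set.univ P ∧ P.card ≤ k ∧ v = varTot μ p F P}
    with hSdef
  have hVar : VarOn μ p k F Set.univ = sInf S := rfl
  have hbdd : BddBelow S := by
    refine ⟨0, ?_⟩
    rintro v ⟨P, _, _, rfl⟩
    exact varTot_nonneg μ p F P
  have hSne : S.Nonempty := by
    refine ⟨varTot μ p F {Set.univ}, {Set.univ}, ⟨?_, ?_, ?_⟩, ?_, rfl⟩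
    · intro B hB
      simp only [Finset.mem_singleton] at hB
      subst hB
      exact MeasurableSet.univ
    · simp
    · simp
    · simpa using hk
  constructor
  · -- first inequality
    rw [hVar]
    refine le_csInf hSne ?_
    rintro v ⟨P, ⟨hPm, hPd, hPu⟩, hPc, rfl⟩
    set m : Set Ω → ℝ := fun B => ⨍ y in B, F y ∂μ with hm
    set g : Ω → ℝ := fun x => ∑ B ∈ P, Set.indicator B (fun _ => m B) x with hg
    have hgval : ∀ B ∈ P, ∀ x ∈ B, g x = m B := by
      intro B hB x hx
      show ∑ B' ∈ P, Set.indicator B' (fun _ => m B') x = m B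
      have hrw : ∑ B' ∈ P, Set.indicator B' (fun _ => m B') x
          = Set.indicator B (fun _ => m B) x := by
        refine Finset.sum_eq_single_of_mem B hB ?_
        intro B' hB' hne
        refine Set.indicator_of_notMem ?_ _
        exact fun hxB' => (Set.disjoint_left.mp (hPd hB' hB hne)) hxB' hx
      rw [hrw, Set.indicator_of_mem hx]

    have hgmeas : Measurable g :=
      Finset.measurable_sum _ fun B hB => measurable_const.indicator (hPm B hB)
    have hgmem : MemLp g (ENNReal.ofReal p) μ :=
      memLp_finsetSum P fun B hB =>
        memLp_indicator_const _ (hPm B hB) _ (Or.inr (measure_ne_top μ B))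
    have hcover : ∀ x : Ω, ∃ B ∈ P, x ∈ B := by
      intro x
      have hx : x ∈ ⋃₀ (↑P : Set (Set Ω)) := by rw [hPu]; trivial
      simpa using hx
    have hmemG : hgmem.toLp g ∈ Gpk (ENNReal.ofReal p) μ k := by
      refine ⟨g, ⟨hgmeas, P.image m, (Finset.card_image_le).trans hPc, fun x => ?_⟩,
        hgmem.coeFn_toLp⟩
      obtain ⟨B, hB, hxB⟩ := hcover x
      rw [hgval B hB x hxB]
      exact Finset.mem_image_of_mem m hB
    refine le_trans (Metric.infDist_le_dist_of_mem hmemG) ?_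
    rw [dist_eq_rpow μ hp f _ hgmem.coeFn_toLp, varTot]
    refine Real.rpow_le_rpow (integral_nonneg fun x => Real.rpow_nonneg (abs_nonneg _) _)
      ?_ (by positivity)
    have hIint : Integrable (fun x => |F x - g x| ^ p) μ := by
      have h1 := (hFmem.sub hgmem).integrable_norm_rpow hq0 ENNReal.ofReal_ne_top
      simpa [Real.norm_eq_abs, ENNReal.toReal_ofReal hp0.le] using h1
    rw [integral_partition μ ⟨hPm, hPd, hPu⟩ hIint]
    refine Finset.sum_le_sum fun B hB => ?_
    have hcongB : ∫ x in B, |F x - g x| ^ p ∂μ = ∫ x in B, |F x - m B| ^ p ∂μ :=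
      setIntegral_congr_fun (hPm B hB) fun x hx => by rw [hgval B hB x hx]
    rw [hcongB]
    rcases eq_or_lt_of_le (zero_le : (0:ℝ≥0∞) ≤ μ B) with h0 | h0
    · have hz : varP μ p F B = 0 := by
        rw [varP, if_neg]
        rintro ⟨hc, -⟩
        rw [← h0] at hc
        exact lt_irrefl 0 hc
      have hres : μ.restrict B = 0 := Measure.restrict_eq_zero.mpr h0.symm
      rw [hz, Real.zero_rpow hp0.ne', hres, integral_zero_measure]
    · have hcond : 0 < μ B ∧ μ B < ⊤ := ⟨h0, measure_lt_top μ B⟩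
      have hS0 : (0:ℝ) ≤ (μ B).toReal⁻¹ * ∫ z in B ×ˢ B, |F z.1 - F z.2| ^ p ∂(μ.prod μ) :=
        mul_nonneg (inv_nonneg.mpr ENNReal.toReal_nonneg)
          (integral_nonneg fun z => Real.rpow_nonneg (abs_nonneg _) _)
      rw [varP, if_pos hcond, one_div, Real.rpow_inv_rpow hS0 hp0.ne']
      exact jensen_bound μ hp hFmem h0
  · -- second inequality
    have hone : IsSimpleLE k (fun _ : Ω => (0:ℝ)) :=
      ⟨measurable_const, {0}, by simpa using hk, fun x => by simp⟩
    have hne : (Gpk (ENNReal.ofReal p) μ k).Nonempty :=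
      ⟨(memLp_const (0:ℝ)).toLp _, fun _ => (0:ℝ), hone, (memLp_const (0:ℝ)).coeFn_toLp⟩
    have key : ∀ gL ∈ Gpk (ENNReal.ofReal p) μ k,
        VarOn μ p k F Set.univ ≤ 2 * dist f gL := by
      rintro gL ⟨g0, ⟨hg0m, s, hscard, hsval⟩, haeg⟩
      set P : Finset (Set Ω) := s.image (fun c => g0 ⁻¹' {c}) with hPdef
      have hPart : IsPartitionOf Set.univ P := by
        refine ⟨?_, ?_, ?_⟩
        · intro B hB
          obtain ⟨c, -, rfl⟩ := Finset.mem_image.mp hB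
          exact hg0m (measurableSet_singleton c)
        · intro B hB B' hB' hne'
          simp only [hPdef, Finset.coe_image, Set.mem_image] at hB hB'
          obtain ⟨c, -, rfl⟩ := hB
          obtain ⟨c', -, rfl⟩ := hB'
          have hcc : c ≠ c' := fun h => hne' (by rw [h])
          simp only [Function.onFun, id]
          rw [Set.disjoint_left]
          rintro x hx hx'
          simp only [Set.mem_preimage, Set.mem_singleton_iff] at hx hx'
          exact hcc (hx ▸ hx')
        · ext x
          simp only [Set.mem_sUnion, Set.mem_univ, iff_true]
          exact ⟨g0 ⁻¹' {g0 x}, by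
            simp only [hPdef, Finset.coe_image, Set.mem_image]
            exact ⟨g0 x, hsval x, rfl⟩, by simp⟩
      have hPc : P.card ≤ k := (Finset.card_image_le).trans hscard
      have hg0mem : MemLp g0 (ENNReal.ofReal p) μ := (Lp.memLp gL).ae_eq haeg
      have hdist : dist f gL = (∫ x, |F x - g0 x| ^ p ∂μ) ^ (1/p) :=
        dist_eq_rpow μ hp f gL haeg
      have hIint : Integrable (fun x => |F x - g0 x| ^ p) μ := by
        have h1 := (hFmem.sub hg0mem).integrable_norm_rpow hq0 ENNReal.ofReal_ne_top
        simpa [Real.norm_eq_abs, ENNReal.toReal_ofReal hp0.le] using h1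
      have hD0 : (0:ℝ) ≤ ∫ x, |F x - g0 x| ^ p ∂μ :=
        integral_nonneg fun x => Real.rpow_nonneg (abs_nonneg _) _
      have hsum : ∑ B ∈ P, varP μ p F B ^ p ≤ 2 ^ p * ∫ x, |F x - g0 x| ^ p ∂μ := by
        have hstep : ∀ B ∈ P, varP μ p F B ^ p ≤ 2 ^ p * ∫ x in B, |F x - g0 x| ^ p ∂μ := by
          intro B hB
          obtain ⟨c, -, rfl⟩ := Finset.mem_image.mp hB
          have hle := varP_le_two μ hp hFmem (g0 ⁻¹' {c}) c
          have hcongB : ∫ x in g0 ⁻¹' {c}, |F x - c| ^ p ∂μ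
              = ∫ x in g0 ⁻¹' {c}, |F x - g0 x| ^ p ∂μ := by
            refine setIntegral_congr_fun (hg0m (measurableSet_singleton c)) fun x hx => ?_
            simp only [Set.mem_preimage, Set.mem_singleton_iff] at hx
            rw [hx]
          rw [hcongB] at hle
          have hB0 : (0:ℝ) ≤ ∫ x in g0 ⁻¹' {c}, |F x - g0 x| ^ p ∂μ :=
            integral_nonneg fun x => Real.rpow_nonneg (abs_nonneg _) _
          calc varP μ p F (g0 ⁻¹' {c}) ^ p
              ≤ (2 * (∫ x in g0 ⁻¹' {c}, |F x - g0 x| ^ p ∂μ) ^ (1/p)) ^ p :=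
                Real.rpow_le_rpow (varP_nonneg μ p F _) hle hp0.le
            _ = 2 ^ p * ∫ x in g0 ⁻¹' {c}, |F x - g0 x| ^ p ∂μ := by
                rw [Real.mul_rpow (by norm_num) (Real.rpow_nonneg hB0 _), one_div,
                  Real.rpow_inv_rpow hB0 hp0.ne']
        calc ∑ B ∈ P, varP μ p F B ^ p
            ≤ ∑ B ∈ P, 2 ^ p * ∫ x in B, |F x - g0 x| ^ p ∂μ := Finset.sum_le_sum hstep
          _ = 2 ^ p * ∑ B ∈ P, ∫ x in B, |F x - g0 x| ^ p ∂μ := by rw [Finset.mul_sum]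
          _ = 2 ^ p * ∫ x, |F x - g0 x| ^ p ∂μ := by rw [← integral_partition μ hPart hIint]
      have hvt : varTot μ p F P ≤ 2 * dist f gL := by
        rw [varTot, hdist]
        calc (∑ B ∈ P, varP μ p F B ^ p) ^ (1/p)
            ≤ (2 ^ p * ∫ x, |F x - g0 x| ^ p ∂μ) ^ (1/p) :=
              Real.rpow_le_rpow (Finset.sum_nonneg fun B _ =>
                Real.rpow_nonneg (varP_nonneg μ p F B) _) hsum (by positivity)
          _ = 2 * (∫ x, |F x - g0 x| ^ p ∂μ) ^ (1/p) := by
              rw [Real.mul_rpow (by positivity) hD0, one_div,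
                Real.rpow_rpow_inv (by norm_num) hp0.ne']
      refine le_trans (csInf_le hbdd ⟨P, hPart, hPc, rfl⟩) hvt
    haveI : Nonempty ↥(Gpk (ENNReal.ofReal p) μ k) := hne.to_subtype
    have h2 : VarOn μ p k F Set.univ / 2 ≤ ⨅ y : Gpk (ENNReal.ofReal p) μ k, dist f y := by
      refine le_ciInf fun y => ?_
      have := key y y.2
      linarith
    rw [Metric.infDist_eq_iInf]
    linarith
end
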